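/- arXiv:1712.03519 — 6 statements merged into one kernel-verified Lean document; each statement's English description precedes it below -/
import Mathlib

section
/- In the group G_{2r} with presentation ⟨a, b : ab = ba⁻¹, b^{2r} = 1⟩, for positive integers m, k with k | r and 0 ≤ l < k, the subgroup ⟨a^m b^{2l}, b^{2k}⟩ has index 2km in G_{2r}. -/
/-- Relations for `G_{2r} = ⟨a, b : b⁻¹ a b = a⁻¹, b^{2r} = 1⟩`. -/
def GRels (r : ℕ) : Set (FreeGroup (Fin 2)) :=
  {(FreeGroup.of 1)⁻¹ * FreeGroup.of 0 * FreeGroup.of 1 * FreeGroup.of 0,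
   (FreeGroup.of 1) ^ (2 * r)}

/-- The group `G_{2r}`. -/
abbrev GGrp (r : ℕ) := PresentedGroup (GRels r)

/-- The generator `a` of `G_{2r}`. -/
def ga (r : ℕ) : GGrp r := PresentedGroup.of 0

/-- The generator `b` of `G_{2r}`. -/
def gb (r : ℕ) : GGrp r := PresentedGroup.of 1


/-- Concrete model of `G_{2r}`: pairs `(n, j)` with twisted multiplication. -/
@[ext] structure Cc (r : ℕ) where
  n : ℤ
  j : ZMod (2 * r)

namespace Cc
variable {r : ℕ}

/-- The sign character. -/
def chi (j : ZMod (2 * r)) : ℤ := (-1) ^ j.val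

lemma chi_mul_self (j : ZMod (2 * r)) : chi j * chi j = 1 := by
  rw [chi, ← mul_pow]; norm_num

lemma neg_one_pow_mod (x c : ℕ) (hc : 2 ∣ c) : ((-1 : ℤ)) ^ (x % c) = (-1) ^ x := by
  obtain ⟨d, rfl⟩ := hc
  conv_rhs => rw [← Nat.mod_add_div x (2 * d), pow_add,
    Even.neg_one_pow (⟨d * (x / (2 * d)), by ring⟩ : Even (2 * d * (x / (2 * d)))), mul_one]

lemma chi_add [NeZero r] (i j : ZMod (2 * r)) : chi (i + j) = chi i * chi j := by
  have : NeZero (2 * r) := ⟨by have := NeZero.ne r; omega⟩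
  rw [chi, chi, chi, ZMod.val_add, neg_one_pow_mod _ _ ⟨r, rfl⟩, pow_add]

lemma chi_zero [NeZero r] : chi (0 : ZMod (2 * r)) = 1 := by
  have : NeZero (2 * r) := ⟨by have := NeZero.ne r; omega⟩
  rw [chi, ZMod.val_zero, pow_zero]

lemma chi_neg [NeZero r] (j : ZMod (2 * r)) : chi (-j) = chi j := by
  have h1 : chi j * chi (-j) = 1 := by rw [← chi_add, add_neg_cancel, chi_zero]
  have h2 := chi_mul_self j
  have hne : chi j ≠ 0 := by
    intro h; rw [h, zero_mul] at h2; exact one_ne_zero h2.symm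
  exact mul_left_cancel₀ hne (by rw [h1, h2])

instance : Mul (Cc r) := ⟨fun x y => ⟨x.n + chi x.j * y.n, x.j + y.j⟩⟩
instance : One (Cc r) := ⟨⟨0, 0⟩⟩
instance : Inv (Cc r) := ⟨fun x => ⟨-(chi x.j * x.n), -x.j⟩⟩

@[simp] lemma mul_n (x y : Cc r) : (x * y).n = x.n + chi x.j * y.n := rfl
@[simp] lemma mul_j (x y : Cc r) : (x * y).j = x.j + y.j := rfl
@[simp] lemma one_n : (1 : Cc r).n = 0 := rfl
@[simp] lemma one_j : (1 : Cc r).j = 0 := rfl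
@[simp] lemma inv_n (x : Cc r) : (x⁻¹).n = -(chi x.j * x.n) := rfl
@[simp] lemma inv_j (x : Cc r) : (x⁻¹).j = -x.j := rfl

instance [NeZero r] : Group (Cc r) where
  mul_assoc a b c := by
    ext
    · simp [chi_add]; ring
    · simp [add_assoc]
  one_mul a := by ext <;> simp [chi_zero]
  mul_one a := by ext <;> simp
  inv_mul_cancel a := by
    ext
    · simp [chi_neg]
    · simp

end Cc

namespace Cc
variable {r : ℕ}

/-- image of `a`. -/
def A : Cc r := ⟨1, 0⟩
/-- image of `b`. -/
def B : Cc r := ⟨0, 1⟩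

lemma chi_natCast_even [NeZero r] (u : ℕ) : chi ((2 * u : ℕ) : ZMod (2 * r)) = 1 := by
  have : NeZero (2 * r) := ⟨by have := NeZero.ne r; omega⟩
  rw [chi, ZMod.val_natCast, neg_one_pow_mod _ _ ⟨r, rfl⟩, pow_mul]
  norm_num

lemma chi_one' [NeZero r] : chi (1 : ZMod (2 * r)) = -1 := by
  have : Fact (1 < 2 * r) := ⟨by have := NeZero.ne r; omega⟩
  rw [chi, ZMod.val_one, pow_one]

lemma B_pow [NeZero r] (t : ℕ) : (B : Cc r) ^ t = ⟨0, (t : ZMod (2 * r))⟩ := by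
  induction t with
  | zero => ext <;> simp [B]
  | succ t ih =>
      rw [pow_succ, ih]
      ext <;> simp [B]

lemma chi_natCast_mul [NeZero r] (t : ℕ) (j : ZMod (2 * r)) :
    chi ((t : ZMod (2 * r)) * j) = chi j ^ t := by
  induction t with
  | zero => simp [chi_zero]
  | succ t ih =>
      have : ((t + 1 : ℕ) : ZMod (2 * r)) * j = (t : ZMod (2 * r)) * j + j := by
        push_cast; ring
      rw [this, chi_add, ih, pow_succ]

lemma pow_even [NeZero r] (n : ℤ) (j : ZMod (2 * r)) (h : chi j = 1) (t : ℕ) :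
    (⟨n, j⟩ : Cc r) ^ t = ⟨(t : ℤ) * n, (t : ZMod (2 * r)) * j⟩ := by
  induction t with
  | zero => ext <;> simp
  | succ t ih =>
      rw [pow_succ, ih]
      have hch : chi ((t : ZMod (2 * r)) * j) = 1 := by rw [chi_natCast_mul, h, one_pow]
      ext
      · simp [hch]; push_cast; ring
      · simp; push_cast; ring

lemma zpow_even [NeZero r] (n : ℤ) (j : ZMod (2 * r)) (h : chi j = 1) (s : ℤ) :
    (⟨n, j⟩ : Cc r) ^ s = ⟨s * n, (s : ZMod (2 * r)) * j⟩ := by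
  cases s with
  | ofNat t =>
      rw [Int.ofNat_eq_coe, zpow_natCast, pow_even n j h t]
      ext <;> push_cast <;> ring
  | negSucc t =>
      rw [zpow_negSucc, pow_even n j h (t + 1)]
      have hch : chi (((t + 1 : ℕ) : ZMod (2 * r)) * j) = 1 := by
        rw [chi_natCast_mul, h, one_pow]
      ext
      · simp only [inv_n, hch, Int.negSucc_eq]; push_cast; ring
      · simp only [inv_j, Int.negSucc_eq]; push_cast; ring

lemma A_zpow [NeZero r] (s : ℤ) : (A : Cc r) ^ s = ⟨s, 0⟩ := by
  rw [A, zpow_even 1 0 chi_zero s]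
  ext <;> simp

lemma closure_AB [NeZero r] : Subgroup.closure ({A, B} : Set (Cc r)) = ⊤ := by
  rw [eq_top_iff]
  rintro ⟨n, j⟩ -
  have h1 : (A : Cc r) ^ n ∈ Subgroup.closure ({A, B} : Set (Cc r)) :=
    Subgroup.zpow_mem _ (Subgroup.subset_closure (by simp)) n
  have h2 : (B : Cc r) ^ j.val ∈ Subgroup.closure ({A, B} : Set (Cc r)) :=
    Subgroup.pow_mem _ (Subgroup.subset_closure (by simp)) j.val
  have : (⟨n, j⟩ : Cc r) = A ^ n * B ^ j.val := by
    rw [A_zpow, B_pow]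
    ext
    · simp [chi_zero]
    · simp [ZMod.natCast_val, ZMod.cast_id]
  rw [this]
  exact Subgroup.mul_mem _ h1 h2

end Cc

section Phi
variable {r : ℕ}

/-- The images of the generators in the concrete model. -/
def fgen (r : ℕ) : Fin 2 → Cc r := ![Cc.A, Cc.B]

open Cc in
lemma fgen_rels [NeZero r] : ∀ w ∈ GRels r, FreeGroup.lift (fgen r) w = 1 := by
  intro w hw
  rcases hw with rfl | hw
  · simp only [map_mul, map_inv, FreeGroup.lift_apply_of, fgen]
    simp only [Matrix.cons_val_one, Matrix.cons_val_zero, Matrix.head_cons]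
    ext
    · simp [A, B, chi_one', chi_neg, chi_zero, chi_add]
    · simp [A, B]
  · rw [Set.mem_singleton_iff] at hw
    subst hw
    rw [map_pow, FreeGroup.lift_apply_of]
    have : (fgen r 1) = Cc.B := by simp [fgen]
    rw [this, Cc.B_pow]
    ext <;> simp

/-- The canonical homomorphism from `G_{2r}` to the concrete model. -/
def phi (r : ℕ) [NeZero r] : GGrp r →* Cc r := PresentedGroup.toGroup fgen_rels

@[simp] lemma phi_ga [NeZero r] : phi r (ga r) = Cc.A := by
  rw [ga, phi]; exact PresentedGroup.toGroup.of _
@[simp] lemma phi_gb [NeZero r] : phi r (gb r) = Cc.B := by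
  rw [gb, phi]; exact PresentedGroup.toGroup.of _

end Phi

section Psi
variable {r : ℕ}

lemma grel1 (r : ℕ) : (gb r)⁻¹ * ga r * gb r * ga r = 1 := by
  have hmem : ((FreeGroup.of 1)⁻¹ * FreeGroup.of 0 * FreeGroup.of 1 * FreeGroup.of 0 :
      FreeGroup (Fin 2)) ∈ Subgroup.normalClosure (GRels r) :=
    Subgroup.subset_normalClosure (Or.inl rfl)
  have : (gb r)⁻¹ * ga r * gb r * ga r =
      PresentedGroup.mk (GRels r)
        ((FreeGroup.of 1)⁻¹ * FreeGroup.of 0 * FreeGroup.of 1 * FreeGroup.of 0) := by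
    simp only [map_mul, map_inv]
    rfl
  rw [this]
  exact (QuotientGroup.eq_one_iff _).mpr hmem

lemma grelb (r : ℕ) : (gb r) ^ (2 * r) = 1 := by
  have hmem : ((FreeGroup.of 1) ^ (2 * r) : FreeGroup (Fin 2)) ∈
      Subgroup.normalClosure (GRels r) :=
    Subgroup.subset_normalClosure (Or.inr rfl)
  have : (gb r) ^ (2 * r) = PresentedGroup.mk (GRels r) ((FreeGroup.of 1) ^ (2 * r)) := by
    simp only [map_pow]; rfl
  rw [this]
  exact (QuotientGroup.eq_one_iff _).mpr hmem

lemma gb_conj (r : ℕ) : gb r * ga r * (gb r)⁻¹ = (ga r)⁻¹ := by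
  have h1 : (gb r)⁻¹ * ga r * gb r = (ga r)⁻¹ :=
    mul_eq_one_iff_eq_inv.mp (grel1 r)
  have h2 : gb r * ((gb r)⁻¹ * ga r * gb r) * (gb r)⁻¹ = gb r * (ga r)⁻¹ * (gb r)⁻¹ := by
    rw [h1]
  have h3 : gb r * ((gb r)⁻¹ * ga r * gb r) * (gb r)⁻¹ = ga r := by group
  have h4 : ga r = gb r * (ga r)⁻¹ * (gb r)⁻¹ := h3.symm.trans h2
  calc gb r * ga r * (gb r)⁻¹ = (gb r * (ga r)⁻¹ * (gb r)⁻¹)⁻¹ := by group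
    _ = (ga r)⁻¹ := by rw [← h4]

lemma gb_conj_zpow (r : ℕ) (w : ℤ) : gb r * (ga r) ^ w * (gb r)⁻¹ = (ga r) ^ (-w) := by
  have : gb r * (ga r) ^ w * (gb r)⁻¹ = (MulAut.conj (gb r)) ((ga r) ^ w) := rfl
  rw [this, map_zpow]
  have : (MulAut.conj (gb r)) (ga r) = (ga r)⁻¹ := gb_conj r
  rw [this, inv_zpow, ← zpow_neg]

lemma gb_pow_conj (r : ℕ) (t : ℕ) : ∀ w : ℤ,
    (gb r) ^ t * (ga r) ^ w * ((gb r) ^ t)⁻¹ = (ga r) ^ ((-1 : ℤ) ^ t * w) := by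
  induction t with
  | zero => intro w; simp
  | succ t ih =>
      intro w
      have : (gb r) ^ (t + 1) * (ga r) ^ w * ((gb r) ^ (t + 1))⁻¹ =
          (gb r) ^ t * (gb r * (ga r) ^ w * (gb r)⁻¹) * ((gb r) ^ t)⁻¹ := by
        rw [pow_succ]; group
      rw [this, gb_conj_zpow, ih (-w), show (-1 : ℤ) ^ t * (-w) = (-1 : ℤ) ^ (t + 1) * w by ring]

lemma gb_pow_swap (r : ℕ) (t : ℕ) (w : ℤ) :
    (gb r) ^ t * (ga r) ^ w = (ga r) ^ ((-1 : ℤ) ^ t * w) * (gb r) ^ t := by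
  rw [← gb_pow_conj r t w]; group

lemma gb_pow_mod (r : ℕ) (t : ℕ) : (gb r) ^ t = (gb r) ^ (t % (2 * r)) := by
  conv_lhs => rw [← Nat.mod_add_div t (2 * r), pow_add, pow_mul, grelb, one_pow, mul_one]

/-- The inverse map from the concrete model back to `G_{2r}`. -/
def psiFun (r : ℕ) : Cc r → GGrp r := fun x => ga r ^ x.n * gb r ^ x.j.val

lemma psiFun_mul [NeZero r] (x y : Cc r) :
    psiFun r (x * y) = psiFun r x * psiFun r y := by
  have hNZ : NeZero (2 * r) := ⟨by have := NeZero.ne r; omega⟩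
  unfold psiFun
  rw [Cc.mul_n, Cc.mul_j, ZMod.val_add, ← gb_pow_mod, pow_add]
  have hswap : gb r ^ x.j.val * ga r ^ y.n =
      ga r ^ ((-1 : ℤ) ^ x.j.val * y.n) * gb r ^ x.j.val := gb_pow_swap r _ _
  have hchi : ((-1 : ℤ) ^ x.j.val) = Cc.chi x.j := rfl
  calc ga r ^ (x.n + Cc.chi x.j * y.n) * (gb r ^ x.j.val * gb r ^ y.j.val)
      = ga r ^ x.n * ((ga r ^ (Cc.chi x.j * y.n) * gb r ^ x.j.val) * gb r ^ y.j.val) := by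
        rw [zpow_add]; group
    _ = ga r ^ x.n * ((gb r ^ x.j.val * ga r ^ y.n) * gb r ^ y.j.val) := by
        rw [hswap, hchi]
    _ = ga r ^ x.n * gb r ^ x.j.val * (ga r ^ y.n * gb r ^ y.j.val) := by group

/-- `psi` as a homomorphism. -/
def psi (r : ℕ) [NeZero r] : Cc r →* GGrp r := MonoidHom.mk' (psiFun r) psiFun_mul

lemma psi_comp_phi [NeZero r] : (psi r).comp (phi r) = MonoidHom.id (GGrp r) := by
  have : Fact (1 < 2 * r) := ⟨by have := NeZero.ne r; omega⟩
  apply PresentedGroup.ext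
  intro x
  fin_cases x
  · show psi r (phi r (ga r)) = ga r
    rw [phi_ga]
    show psiFun r Cc.A = ga r
    unfold psiFun Cc.A
    simp [ZMod.val_zero]
  · show psi r (phi r (gb r)) = gb r
    rw [phi_gb]
    show psiFun r Cc.B = gb r
    unfold psiFun Cc.B
    simp [ZMod.val_one]

lemma phi_bijective [NeZero r] : Function.Bijective (phi r) := by
  constructor
  · intro g h hgh
    have := congrArg (psi r) hgh
    have h1 : ∀ z : GGrp r, psi r (phi r z) = z := fun z => by
      simpa using DFunLike.congr_fun (psi_comp_phi (r := r)) z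
    rwa [h1, h1] at this
  · intro x
    refine ⟨ga r ^ x.n * gb r ^ x.j.val, ?_⟩
    rw [map_mul, map_zpow, map_pow, phi_ga, phi_gb, Cc.A_zpow, Cc.B_pow]
    ext
    · simp [Cc.chi_zero]
    · simp [ZMod.natCast_val, ZMod.cast_id]

/-- The isomorphism between `G_{2r}` and the concrete model. -/
noncomputable def gEquiv (r : ℕ) [NeZero r] : GGrp r ≃* Cc r :=
  MulEquiv.ofBijective (phi r) phi_bijective

end Psi

namespace Cc

section Index

/-- `a^m b^{2l}` in the model. -/
def X (r m l : ℕ) : Cc r := ⟨(m : ℤ), ((2 * l : ℕ) : ZMod (2 * r))⟩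
/-- `b^{2k}` in the model. -/
def Y (r k : ℕ) : Cc r := ⟨0, ((2 * k : ℕ) : ZMod (2 * r))⟩

variable {r m k l : ℕ}

lemma X_zpow [NeZero r] (s : ℤ) : (X r m l) ^ s = ⟨s * m, ((2 * l * s : ℤ) : ZMod (2 * r))⟩ := by
  rw [X, zpow_even _ _ (chi_natCast_even l) s]
  ext
  · simp
  · simp only; push_cast; ring

lemma Y_zpow [NeZero r] (c : ℤ) : (Y r k) ^ c = ⟨0, ((2 * k * c : ℤ) : ZMod (2 * r))⟩ := by
  rw [Y, zpow_even _ _ (chi_natCast_even k) c]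
  ext
  · simp
  · simp only; push_cast; ring

lemma two_k_dvd (hkr : k ∣ r) : 2 * k ∣ 2 * r := mul_dvd_mul_left 2 hkr

/-- The coset invariant. -/
def fInv (r m k l : ℕ) (hkr : k ∣ r) : Cc r → ZMod m × ZMod (2 * k) := fun x =>
  ((x.n : ZMod m),
    ZMod.castHom (two_k_dvd hkr) (ZMod (2 * k)) x.j
      - ((2 * l * chi x.j * (x.n / (m : ℤ)) : ℤ) : ZMod (2 * k)))

lemma chi_eq_of_cast_eq {N : ℕ} (hN : 2 ∣ N) [NeZero N] (i j : ZMod N)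
    (h : ZMod.castHom hN (ZMod 2) i = ZMod.castHom hN (ZMod 2) j) :
    ((-1 : ℤ) ^ i.val) = (-1 : ℤ) ^ j.val := by
  have hc : ∀ x : ZMod N, ZMod.castHom hN (ZMod 2) x = (x.val : ZMod 2) := fun x => by
    rw [ZMod.castHom_apply, ZMod.natCast_val]
  rw [hc, hc] at h
  have hmod : i.val % 2 = j.val % 2 := (ZMod.natCast_eq_natCast_iff _ _ _).mp h
  rw [← neg_one_pow_mod i.val 2 (dvd_refl 2), ← neg_one_pow_mod j.val 2 (dvd_refl 2), hmod]

lemma cast_ker [NeZero r] (hkr : k ∣ r) (hk : 1 ≤ k) (x : ZMod (2 * r))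
    (h : ZMod.castHom (two_k_dvd hkr) (ZMod (2 * k)) x = 0) :
    ∃ c : ℤ, x = ((2 * k * c : ℤ) : ZMod (2 * r)) := by
  have : NeZero (2 * k) := ⟨by omega⟩
  have hx : ((x.val : ℕ) : ZMod (2 * r)) = x := ZMod.natCast_rightInverse x
  rw [← hx, map_natCast] at h
  obtain ⟨c, hc⟩ := (ZMod.natCast_eq_zero_iff _ _).mp h
  exact ⟨c, by rw [← hx, hc]; push_cast; ring⟩

lemma f_mul_X [NeZero r] (hkr : k ∣ r) (hm : 1 ≤ m) (g : Cc r) :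
    fInv r m k l hkr (g * X r m l) = fInv r m k l hkr g := by
  have hm0 : (m : ℤ) ≠ 0 := Int.natCast_ne_zero.mpr (by omega)
  have hchi : chi ((g * X r m l).j) = chi g.j := by
    rw [mul_j, X, chi_add, chi_natCast_even, mul_one]
  have hn : (g * X r m l).n = g.n + chi g.j * m := rfl
  have hdiv : (g.n + chi g.j * (m : ℤ)) / (m : ℤ) = g.n / m + chi g.j :=
    Int.add_mul_ediv_right _ _ hm0
  refine Prod.ext ?_ ?_
  · show (((g * X r m l).n : ℤ) : ZMod m) = ((g.n : ℤ) : ZMod m)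
    rw [hn]
    push_cast [ZMod.natCast_self]
    ring
  · show ZMod.castHom (two_k_dvd hkr) (ZMod (2 * k)) ((g * X r m l).j)
        - ((2 * l * chi ((g * X r m l).j) * ((g * X r m l).n / (m : ℤ)) : ℤ) : ZMod (2 * k))
      = ZMod.castHom (two_k_dvd hkr) (ZMod (2 * k)) g.j
        - ((2 * l * chi g.j * (g.n / (m : ℤ)) : ℤ) : ZMod (2 * k))
    rw [hchi, hn, hdiv, mul_j]
    have hXj : (X r m l).j = ((2 * l : ℕ) : ZMod (2 * r)) := rfl
    rw [hXj, map_add, map_natCast]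
    have hsq : chi g.j * chi g.j = 1 := chi_mul_self g.j
    have : (2 * l * chi g.j * (g.n / (m : ℤ) + chi g.j) : ℤ)
        = 2 * l * chi g.j * (g.n / (m : ℤ)) + 2 * l := by
      have : (2 * l : ℤ) * chi g.j * chi g.j = 2 * l := by
        rw [mul_assoc, hsq, mul_one]
      linear_combination this
    rw [this]
    push_cast
    ring
  
lemma f_mul_Y [NeZero r] (hkr : k ∣ r) (g : Cc r) :
    fInv r m k l hkr (g * Y r k) = fInv r m k l hkr g := by
  have hchi : chi ((g * Y r k).j) = chi g.j := by
    rw [mul_j, Y, chi_add, chi_natCast_even, mul_one]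
  have hn : (g * Y r k).n = g.n := by
    show g.n + chi g.j * 0 = g.n; ring
  refine Prod.ext ?_ ?_
  · show (((g * Y r k).n : ℤ) : ZMod m) = ((g.n : ℤ) : ZMod m)
    rw [hn]
  · show ZMod.castHom (two_k_dvd hkr) (ZMod (2 * k)) ((g * Y r k).j)
        - ((2 * l * chi ((g * Y r k).j) * ((g * Y r k).n / (m : ℤ)) : ℤ) : ZMod (2 * k))
      = ZMod.castHom (two_k_dvd hkr) (ZMod (2 * k)) g.j
        - ((2 * l * chi g.j * (g.n / (m : ℤ)) : ℤ) : ZMod (2 * k))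
    rw [hchi, hn, mul_j]
    have hYj : (Y r k).j = ((2 * k : ℕ) : ZMod (2 * r)) := rfl
    rw [hYj, map_add, map_natCast, ZMod.natCast_self, add_zero]

end Index

end Cc

namespace Cc

section Index2

variable {r m k l : ℕ}

lemma f_mul_mem [NeZero r] (hkr : k ∣ r) (hm : 1 ≤ m)
    {h : Cc r} (hh : h ∈ Subgroup.closure {X r m l, Y r k}) (g : Cc r) :
    fInv r m k l hkr (g * h) = fInv r m k l hkr g := by
  induction hh using Subgroup.closure_induction generalizing g with
  | mem x hx =>
      rcases hx with rfl | hx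
      · exact f_mul_X hkr hm g
      · rw [Set.mem_singleton_iff] at hx; subst hx; exact f_mul_Y hkr g
  | one => rw [mul_one]
  | mul x y hx hy ihx ihy => rw [← mul_assoc, ihy (g * x), ihx g]
  | inv x hx ihx =>
      have := ihx (g * x⁻¹)
      rwa [mul_assoc, inv_mul_cancel, mul_one, eq_comm] at this

lemma f_injOn [NeZero r] (hkr : k ∣ r) (hm : 1 ≤ m) (hk : 1 ≤ k)
    (a b : Cc r) (hf : fInv r m k l hkr a = fInv r m k l hkr b) :
    a⁻¹ * b ∈ Subgroup.closure {X r m l, Y r k} := by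
  have : NeZero (2 * r) := ⟨by have := NeZero.ne r; omega⟩
  have : NeZero (2 * k) := ⟨by omega⟩
  have : NeZero m := ⟨by omega⟩
  have hm0 : (m : ℤ) ≠ 0 := Int.natCast_ne_zero.mpr (by omega)
  have h1 := congrArg Prod.fst hf
  have h2 := congrArg Prod.snd hf
  simp only [fInv] at h1 h2
  -- first component: m ∣ b.n - a.n
  have hdvd : (m : ℤ) ∣ (b.n - a.n) := by
    have : ((b.n - a.n : ℤ) : ZMod m) = 0 := by
      push_cast
      rw [← h1]; ring
    exact (ZMod.intCast_zmod_eq_zero_iff_dvd _ _).mp this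
  obtain ⟨c, hc⟩ := hdvd
  set s : ℤ := chi a.j * c with hs
  -- parity: chi a.j = chi b.j
  have h2dvd : (2 : ℕ) ∣ 2 * k := ⟨k, rfl⟩
  have hpar : chi b.j = chi a.j := by
    have := congrArg (ZMod.castHom h2dvd (ZMod 2)) h2
    simp only [map_sub, map_intCast] at this
    have h20 : ((2 : ℤ) : ZMod 2) = 0 := by decide
    rw [show ((2 * l * chi a.j * (a.n / (m:ℤ)) : ℤ) : ZMod 2)
          = ((2:ℤ) : ZMod 2) * ((l * chi a.j * (a.n / (m:ℤ)) : ℤ) : ZMod 2) by push_cast; ring,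
        show ((2 * l * chi b.j * (b.n / (m:ℤ)) : ℤ) : ZMod 2)
          = ((2:ℤ) : ZMod 2) * ((l * chi b.j * (b.n / (m:ℤ)) : ℤ) : ZMod 2) by push_cast; ring,
        h20, zero_mul, zero_mul, sub_zero, sub_zero] at this
    have hcomp : ∀ x : ZMod (2 * r),
        ZMod.castHom h2dvd (ZMod 2) (ZMod.castHom (two_k_dvd hkr) (ZMod (2 * k)) x)
          = ZMod.castHom (dvd_trans h2dvd (two_k_dvd hkr)) (ZMod 2) x := fun x => by
      rw [← RingHom.comp_apply, ZMod.castHom_comp]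
    rw [hcomp, hcomp] at this
    exact (chi_eq_of_cast_eq _ b.j a.j this.symm : _)
  -- division
  have hbn : b.n = a.n + c * m := by rw [mul_comm c]; omega
  have hdiv : b.n / (m : ℤ) = a.n / m + c := by
    rw [hbn]; exact Int.add_mul_ediv_right _ _ hm0
  -- second component gives the 2k-divisibility
  have hsq : chi a.j * chi a.j = 1 := chi_mul_self a.j
  have hd0 : ZMod.castHom (two_k_dvd hkr) (ZMod (2 * k))
      (b.j - a.j - ((2 * l * s : ℤ) : ZMod (2 * r))) = 0 := by
    rw [map_sub, map_sub, map_intCast]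
    have : ZMod.castHom (two_k_dvd hkr) (ZMod (2 * k)) b.j
        = ZMod.castHom (two_k_dvd hkr) (ZMod (2 * k)) a.j + ((2 * l * s : ℤ) : ZMod (2 * k)) := by
      have := h2
      rw [hpar, hdiv] at this
      have hexp : (2 * l * chi a.j * (a.n / (m:ℤ) + c) : ℤ)
          = 2 * l * chi a.j * (a.n / (m:ℤ)) + 2 * l * s := by
        rw [hs]; ring
      rw [hexp] at this
      push_cast at this ⊢
      linear_combination -this
    rw [this]; ring
  obtain ⟨c2, hc2⟩ := cast_ker hkr hk _ hd0
  -- now exhibit the element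
  have key : a⁻¹ * b = (X r m l) ^ s * (Y r k) ^ c2 := by
    rw [X_zpow, Y_zpow]
    ext
    · show -(chi a.j * a.n) + chi (-a.j) * b.n = s * m + chi _ * 0
      rw [chi_neg, mul_zero, add_zero, hbn, hs]
      ring
    · show -a.j + b.j = ((2 * l * s : ℤ) : ZMod (2 * r)) + ((2 * k * c2 : ℤ) : ZMod (2 * r))
      rw [← hc2]
      ring
  rw [key]
  exact Subgroup.mul_mem _
    (Subgroup.zpow_mem _ (Subgroup.subset_closure (by simp)) s)
    (Subgroup.zpow_mem _ (Subgroup.subset_closure (by simp)) c2)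

lemma f_surj [NeZero r] (hkr : k ∣ r) (hm : 1 ≤ m) (hk : 1 ≤ k) :
    Function.Surjective (fInv r m k l hkr) := by
  have : NeZero (2 * r) := ⟨by have := NeZero.ne r; omega⟩
  have : NeZero (2 * k) := ⟨by omega⟩
  have : NeZero m := ⟨by omega⟩
  rintro ⟨α, β⟩
  refine ⟨⟨(α.val : ℤ), ((β.val : ℕ) : ZMod (2 * r))⟩, ?_⟩
  have hdiv : ((α.val : ℤ)) / (m : ℤ) = 0 := by
    apply Int.ediv_eq_zero_of_lt (by positivity)
    exact_mod_cast α.val_lt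
  refine Prod.ext ?_ ?_
  · show (((α.val : ℤ)) : ZMod m) = α
    push_cast
    exact ZMod.natCast_rightInverse α
  · show ZMod.castHom (two_k_dvd hkr) (ZMod (2 * k)) ((β.val : ℕ) : ZMod (2 * r))
        - ((2 * l * chi _ * ((α.val : ℤ) / (m : ℤ)) : ℤ) : ZMod (2 * k)) = β
    rw [hdiv, map_natCast]
    push_cast
    rw [ZMod.natCast_rightInverse β]
    ring

/-- The index computation in the concrete model. -/
theorem index_closure [NeZero r] (hkr : k ∣ r) (hm : 1 ≤ m) (hk : 1 ≤ k) :
    (Subgroup.closure {X r m l, Y r k}).index = 2 * k * m := by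
  set H : Subgroup (Cc r) := Subgroup.closure {X r m l, Y r k}
  have hwd : ∀ (x y : Cc r), QuotientGroup.leftRel H x y →
      fInv r m k l hkr x = fInv r m k l hkr y := by
    intro x y hxy
    rw [QuotientGroup.leftRel_apply] at hxy
    have := f_mul_mem hkr hm hxy x
    rwa [mul_inv_cancel_left, eq_comm] at this
  let F : (Cc r ⧸ H) → ZMod m × ZMod (2 * k) :=
    fun q => Quotient.liftOn' q (fInv r m k l hkr) hwd
  have hFbij : Function.Bijective F := by
    constructor
    · intro q q'
      induction q using Quotient.inductionOn'
      induction q' using Quotient.inductionOn'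
      intro hqq
      exact Quotient.sound' (QuotientGroup.leftRel_apply.mpr (f_injOn hkr hm hk _ _ hqq))
    · intro p
      obtain ⟨x, hx⟩ := f_surj hkr hm hk p
      exact ⟨Quotient.mk'' x, hx⟩
  have : Subgroup.index H = Nat.card (Cc r ⧸ H) := rfl
  rw [this, Nat.card_congr (Equiv.ofBijective F hFbij), Nat.card_prod,
    Nat.card_zmod, Nat.card_zmod]
  ring

end Index2

end Cc

/-- for `m, k > 0` with `k ∣ r` and `0 ≤ l < k`, the subgroup
`⟨a^m b^{2l}, b^{2k}⟩` has index `2km` in `G_{2r}`. -/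
theorem index_of_F1_subgroup (r m k l : ℕ) (hr : 1 ≤ r) (hm : 1 ≤ m) (hk : 1 ≤ k)
    (hkr : k ∣ r) (hl : l < k) :
    (Subgroup.closure {ga r ^ m * gb r ^ (2 * l), gb r ^ (2 * k)}).index = 2 * k * m := by
  haveI : NeZero r := ⟨by omega⟩
  have hx : phi r (ga r ^ m * gb r ^ (2 * l)) = Cc.X r m l := by
    rw [map_mul, map_pow, map_pow, phi_ga, phi_gb, Cc.B_pow]
    have hA : (Cc.A : Cc r) ^ m = ⟨(m : ℤ), 0⟩ := by rw [← zpow_natCast, Cc.A_zpow]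
    rw [hA]
    ext
    · show (m : ℤ) + Cc.chi 0 * 0 = (m : ℤ)
      rw [mul_zero, add_zero]
    · show (0 : ZMod (2 * r)) + ((2 * l : ℕ) : ZMod (2 * r)) = ((2 * l : ℕ) : ZMod (2 * r))
      rw [zero_add]
  have hy : phi r (gb r ^ (2 * k)) = Cc.Y r k := by
    rw [map_pow, phi_gb, Cc.B_pow]; rfl
  have hmap : (Subgroup.closure {ga r ^ m * gb r ^ (2 * l), gb r ^ (2 * k)}).map (phi r)
      = Subgroup.closure {Cc.X r m l, Cc.Y r k} := by
    rw [MonoidHom.map_closure, Set.image_insert_eq, Set.image_singleton, hx, hy]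
  have hcomap : Subgroup.closure {ga r ^ m * gb r ^ (2 * l), gb r ^ (2 * k)}
      = (Subgroup.closure {Cc.X r m l, Cc.Y r k}).comap (phi r) := by
    rw [← hmap, Subgroup.comap_map_eq_self_of_injective phi_bijective.1]
  rw [hcomap, Subgroup.index_comap_of_surjective _ phi_bijective.2,
    Cc.index_closure hkr hm hk]
end

section
/- In the group G_{2r} = ⟨a, b : ab = ba⁻¹, b^{2r} = 1⟩, for positive integers m, k with (2k-1) | r and 0 ≤ j < m, the subgroup ⟨a^m, a^j b^{2k-1}⟩ has index (2k-1)m in G_{2r}. -/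
/-!
Send `a ↦ (r 1, 0)` and `b ↦ (sr 0, 1)` in `D_m × ℤ/c`, where `c = 2k - 1`; this respects
the relations since `c ∣ 2r`, and it is onto because `c` is odd. The subgroup `⟨a^m, a^j b^c⟩`
maps onto the order-two subgroup generated by `(sr (-j), 0)` and contains the kernel, which is
generated by `a^m` and `b^(2c) = (a^j b^c)^2`. So it is the full preimage of that subgroup, and
its index is `|D_m × ℤ/c| / 2 = cm`.
-/

section InvertingConjugation

variable {G : Type*} [Group G] {a b : G}

theorem semiconjBy_of_inv_mul_mul_eq_inv (h : b⁻¹ * a * b = a⁻¹) : SemiconjBy b a a⁻¹ := by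
  calc b * a = b * (b⁻¹ * a * b)⁻¹ := by rw [h, inv_inv]
    _ = a⁻¹ * b := by group

theorem zpow_mul_zpow_of_even (h : b⁻¹ * a * b = a⁻¹) {t : ℤ} (ht : Even t) (s : ℤ) :
    b ^ t * a ^ s = a ^ s * b ^ t := by
  have hb := semiconjBy_of_inv_mul_mul_eq_inv h
  have hsq : Commute (b ^ (2 : ℤ)) a := by
    have hb' : SemiconjBy b a⁻¹ a := by simpa using hb.inv_right
    rw [zpow_two]; exact hb'.mul_left hb
  obtain ⟨u, rfl⟩ := ht
  rw [← two_mul, zpow_mul]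
  exact (hsq.zpow_zpow u s).eq

theorem zpow_mul_zpow_of_odd (h : b⁻¹ * a * b = a⁻¹) {t : ℤ} (ht : Odd t) (s : ℤ) :
    b ^ t * a ^ s = a ^ (-s) * b ^ t := by
  have hb : b * a ^ s = a ^ (-s) * b := by
    rw [zpow_neg, ← inv_zpow]; exact (semiconjBy_of_inv_mul_mul_eq_inv h).zpow_right s
  obtain ⟨u, rfl⟩ := ht
  rw [zpow_add_one, mul_assoc, hb, ← mul_assoc, zpow_mul_zpow_of_even h (even_two_mul u),
    mul_assoc]

theorem exists_zpow_mul_zpow_of_mem_closure (h : b⁻¹ * a * b = a⁻¹) {x : G}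
    (hx : x ∈ Subgroup.closure {a, b}) : ∃ s t : ℤ, a ^ s * b ^ t = x := by
  have hswap (s t : ℤ) : ∃ s' : ℤ, b ^ t * a ^ s = a ^ s' * b ^ t := by
    rcases Int.even_or_odd t with ht | ht
    · exact ⟨s, zpow_mul_zpow_of_even h ht s⟩
    · exact ⟨-s, zpow_mul_zpow_of_odd h ht s⟩
  induction hx using Subgroup.closure_induction with
  | mem x hx =>
    rcases hx with rfl | rfl
    · exact ⟨1, 0, by simp⟩
    · exact ⟨0, 1, by simp⟩
  | one => exact ⟨0, 0, by simp⟩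
  | mul x y _ _ hx hy =>
    obtain ⟨s, t, rfl⟩ := hx
    obtain ⟨s', t', rfl⟩ := hy
    obtain ⟨s'', hs''⟩ := hswap s' t
    refine ⟨s + s'', t + t', ?_⟩
    calc a ^ (s + s'') * b ^ (t + t') = a ^ s * (a ^ s'' * b ^ t) * b ^ t' := by group
      _ = a ^ s * b ^ t * (a ^ s' * b ^ t') := by rw [← hs'']; group
  | inv x _ hx =>
    obtain ⟨s, t, rfl⟩ := hx
    obtain ⟨s', hs'⟩ := hswap (-s) (-t)
    exact ⟨s', -t, by rw [mul_inv_rev, ← zpow_neg, ← zpow_neg, hs']⟩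

theorem zpow_mul_zpow_sq_of_odd (h : b⁻¹ * a * b = a⁻¹) (s : ℤ) {t : ℤ} (ht : Odd t) :
    (a ^ s * b ^ t) ^ 2 = b ^ (2 * t) := by
  rw [sq, mul_assoc, ← mul_assoc (b ^ t), zpow_mul_zpow_of_odd h ht, two_mul, zpow_add]
  group

end InvertingConjugation

theorem DihedralGroup.sr_zpow_of_even {n : ℕ} (i : ZMod n) {t : ℤ} (ht : Even t) :
    sr i ^ t = 1 := by
  obtain ⟨u, rfl⟩ := ht
  rw [← two_mul, zpow_mul, zpow_two, sr_mul_self, one_zpow]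

theorem DihedralGroup.sr_zpow_of_odd {n : ℕ} (i : ZMod n) {t : ℤ} (ht : Odd t) :
    sr i ^ t = sr i := by
  obtain ⟨u, rfl⟩ := ht
  rw [zpow_add_one, sr_zpow_of_even i (even_two_mul u), one_mul]

theorem DihedralGroup.index_zpowers_sr_one {n : ℕ} (i : ZMod n) (H : Type*) [Group H] :
    (Subgroup.zpowers ((sr i, 1) : DihedralGroup n × H)).index = n * Nat.card H := by
  have h := (Subgroup.zpowers ((sr i, 1) : DihedralGroup n × H)).index_mul_card
  rw [Nat.card_zpowers, Prod.orderOf_mk, orderOf_sr, orderOf_one, Nat.lcm_one_right,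
    Nat.card_prod, nat_card] at h
  linarith

namespace GGrp

open DihedralGroup Multiplicative

variable {r : ℕ}

theorem gb_inv_mul_ga_mul_gb (r : ℕ) : (gb r)⁻¹ * ga r * gb r = (ga r)⁻¹ :=
  eq_inv_of_mul_eq_one_left (PresentedGroup.one_of_mem (Set.mem_insert _ _))

theorem closure_ga_gb (r : ℕ) : Subgroup.closure {ga r, gb r} = ⊤ := by
  rw [← PresentedGroup.closure_range_of]
  congr 1
  ext x
  simp [Fin.exists_fin_two, ga, gb, eq_comm]

theorem exists_ga_zpow_mul_gb_zpow (x : GGrp r) : ∃ s t : ℤ, ga r ^ s * gb r ^ t = x :=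
  exists_zpow_mul_zpow_of_mem_closure (gb_inv_mul_ga_mul_gb r) (by simp [closure_ga_gb])

def toDihedralProd (r m c : ℕ) (hc : c ∣ 2 * r) :
    GGrp r →* DihedralGroup m × Multiplicative (ZMod c) :=
  PresentedGroup.toGroup (f := ![(DihedralGroup.r 1, 1), (sr 0, ofAdd 1)]) <| by
    rintro w (rfl | rfl)
    · ext <;> simp
    · ext
      · simp [pow_mul, sq]
      · simpa using (ZMod.natCast_eq_zero_iff _ _).2 hc

variable {m c : ℕ} {hc : c ∣ 2 * r}

theorem toDihedralProd_zpow_mul_zpow (s t : ℤ) :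
    toDihedralProd r m c hc (ga r ^ s * gb r ^ t) =
      (DihedralGroup.r (s : ZMod m) * sr 0 ^ t, ofAdd (t : ZMod c)) := by
  simp [toDihedralProd, ga, gb, ← ofAdd_zsmul]

theorem toDihedralProd_surjective (hodd : Odd c) :
    Function.Surjective (toDihedralProd r m c hc) := by
  have hrot (s t : ℤ) :
      (DihedralGroup.r (s : ZMod m), ofAdd (t : ZMod c)) ∈ (toDihedralProd r m c hc).range := by
    -- `(c + 1) t` is even and congruent to `t` modulo `c`
    refine ⟨ga r ^ s * gb r ^ ((c + 1) * t), ?_⟩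
    have heven : Even (((c : ℤ) + 1) * t) :=
      (by exact_mod_cast hodd.add_one : Even ((c : ℤ) + 1)).mul_right t
    rw [toDihedralProd_zpow_mul_zpow, sr_zpow_of_even _ heven]
    simp
  have hrefl : (sr 0, 1) ∈ (toDihedralProd r m c hc).range := by
    refine ⟨ga r ^ (0 : ℤ) * gb r ^ (c : ℤ), ?_⟩
    rw [toDihedralProd_zpow_mul_zpow, sr_zpow_of_odd _ (by exact_mod_cast hodd)]
    simp
  rintro ⟨d, y⟩
  obtain ⟨t, rfl⟩ : ∃ t : ℤ, ofAdd (t : ZMod c) = y := ZMod.intCast_surjective (toAdd y)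
  cases d with
  | r i =>
    obtain ⟨s, rfl⟩ := ZMod.intCast_surjective i
    exact hrot s t
  | sr i =>
    obtain ⟨s, rfl⟩ := ZMod.intCast_surjective i
    simpa using mul_mem hrefl (hrot s t)

theorem ker_toDihedralProd_le (hodd : Odd c) :
    (toDihedralProd r m c hc).ker ≤
      Subgroup.closure {ga r ^ (m : ℤ), gb r ^ (2 * c : ℤ)} := by
  intro x hx
  obtain ⟨s, t, rfl⟩ := exists_ga_zpow_mul_gb_zpow x
  rw [MonoidHom.mem_ker, toDihedralProd_zpow_mul_zpow, Prod.mk_eq_one] at hx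
  obtain ⟨hd, ht⟩ := hx
  have ht_even : Even t := by
    by_contra hodd_t
    rw [sr_zpow_of_odd _ (Int.not_even_iff_odd.1 hodd_t), r_mul_sr, one_def] at hd
    cases hd
  rw [sr_zpow_of_even _ ht_even, mul_one, one_def, DihedralGroup.r.injEq,
    ZMod.intCast_zmod_eq_zero_iff_dvd] at hd
  have hct : (c : ℤ) ∣ t := (ZMod.intCast_zmod_eq_zero_iff_dvd t c).1 (ofAdd_eq_one.1 ht)
  have hcop : IsCoprime (2 : ℤ) c := by
    exact_mod_cast Nat.isCoprime_iff_coprime.2 hodd.coprime_two_left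
  obtain ⟨u, rfl⟩ := hcop.mul_dvd ht_even.two_dvd hct
  obtain ⟨v, rfl⟩ := hd
  rw [zpow_mul (ga r), zpow_mul (gb r) (2 * c)]
  exact mul_mem (zpow_mem (Subgroup.subset_closure (Set.mem_insert _ _)) v)
    (zpow_mem (Subgroup.subset_closure (Set.mem_insert_of_mem _ (Set.mem_singleton _))) u)

theorem closure_eq_comap_toDihedralProd (hodd : Odd c) (j : ℕ) :
    Subgroup.closure {ga r ^ m, ga r ^ j * gb r ^ c} =
      (Subgroup.zpowers (sr (-(j : ZMod m)), 1)).comap (toDihedralProd r m c hc) := by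
  set H := Subgroup.closure {ga r ^ m, ga r ^ j * gb r ^ c}
  have hmap : H.map (toDihedralProd r m c hc) = Subgroup.zpowers (sr (-(j : ZMod m)), 1) := by
    have ha : toDihedralProd r m c hc (ga r ^ m) = 1 := by
      simpa [r_zero, Prod.one_eq_mk] using toDihedralProd_zpow_mul_zpow (m := m) (hc := hc) m 0
    have hab : toDihedralProd r m c hc (ga r ^ j * gb r ^ c) = (sr (-(j : ZMod m)), 1) := by
      simpa [sr_zpow_of_odd _ (by exact_mod_cast hodd : Odd (c : ℤ))] using
        toDihedralProd_zpow_mul_zpow (m := m) (hc := hc) j c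
    rw [MonoidHom.map_closure, Set.image_pair, ha, hab, Subgroup.closure_insert_one,
      Subgroup.zpowers_eq_closure]
  have hker : (toDihedralProd r m c hc).ker ≤ H := by
    refine (ker_toDihedralProd_le hodd).trans (Subgroup.closure_le _ |>.2 ?_)
    rintro x (rfl | rfl)
    · rw [zpow_natCast]
      exact Subgroup.subset_closure (Set.mem_insert _ _)
    · have hsq := zpow_mul_zpow_sq_of_odd (gb_inv_mul_ga_mul_gb r) j (t := c)
        (by exact_mod_cast hodd)
      rw [zpow_natCast, zpow_natCast] at hsq
      rw [← hsq]
      have hgen : ga r ^ j * gb r ^ c ∈ H :=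
        Subgroup.subset_closure (Set.mem_insert_of_mem _ (Set.mem_singleton _))
      exact pow_mem hgen 2
  rw [← hmap, Subgroup.comap_map_eq, sup_eq_left.2 hker]

end GGrp

theorem index_of_F2_subgroup_general (r m k j : ℕ) (hk : 1 ≤ k) (hkr : (2 * k - 1) ∣ r) :
    (Subgroup.closure {ga r ^ m, ga r ^ j * gb r ^ (2 * k - 1)}).index = (2 * k - 1) * m := by
  have hodd : Odd (2 * k - 1) := ⟨k - 1, by omega⟩
  have hc : 2 * k - 1 ∣ 2 * r := dvd_mul_of_dvd_right hkr 2
  rw [GGrp.closure_eq_comap_toDihedralProd (hc := hc) hodd,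
    Subgroup.index_comap_of_surjective _ (GGrp.toDihedralProd_surjective (hc := hc) hodd),
    DihedralGroup.index_zpowers_sr_one, Nat.card_congr Multiplicative.toAdd, Nat.card_zmod,
    mul_comm]

/-- for `m, k > 0` with `(2k-1) ∣ r` and `0 ≤ j < m`, the subgroup
`⟨a^m, a^j b^{2k-1}⟩` has index `(2k-1)m` in `G_{2r}`. -/
theorem index_of_F2_subgroup (r m k j : ℕ) (hr : 1 ≤ r) (hm : 1 ≤ m) (hk : 1 ≤ k)
    (hkr : (2 * k - 1) ∣ r) (hj : j < m) :
    (Subgroup.closure {ga r ^ m, ga r ^ j * gb r ^ (2 * k - 1)}).index = (2 * k - 1) * m :=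
  index_of_F2_subgroup_general r m k j hk hkr
end

section
/- Let π be a permutation of a non-empty finite set S and let 𝒞 = {E ⊆ S : π(E) = E}. Then Σ_{E ∈ 𝒞, E ≠ ∅} (-1)^{|E|+1} · sgn(π|_E) = 1. -/
open scoped Classical

/-!
For a `π`-invariant set `E` put `g(E) = (-1)^|E| sgn(π|_E)`. It is multiplicative over disjoint
unions, and `g(O) = -1` for every orbit `O`, since `π` acts on `O` as a cycle of length `|O|`.
An invariant set either contains `O` or misses it, so `E ↦ E ∆ O` reverses the sign of `g`
and therefore `∑_E g(E) = 0`. The sum in the theorem is `-(∑_E g(E) - g(∅)) = 1`.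
-/

open Finset

open scoped symmDiff

namespace Equiv.Perm

variable {S : Type*}

theorem SameCycle.iff_of_apply_iff {π : Perm S} {p : S → Prop} (hp : ∀ x, p (π x) ↔ p x)
    {x y : S} (h : π.SameCycle x y) : p x ↔ p y := by
  obtain ⟨i, rfl⟩ := h
  exact ⟨fun hx => by simpa using ((π.subtypePerm hp ^ i) ⟨x, hx⟩).2,
    fun hy => by simpa using ((π.subtypePerm hp ^ (-i)) ⟨_, hy⟩).2⟩

variable (π : Perm S)

theorem ofSubtype_subtypePerm_union {A B : Finset S} (hAB : _root_.Disjoint A B)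
    (hA : ∀ x, π x ∈ A ↔ x ∈ A) (hB : ∀ x, π x ∈ B ↔ x ∈ B)
    (hU : ∀ x, π x ∈ A ∪ B ↔ x ∈ A ∪ B) :
    ofSubtype (π.subtypePerm hU) = ofSubtype (π.subtypePerm hA) * ofSubtype (π.subtypePerm hB) := by
  ext x
  by_cases hxA : x ∈ A
  · have hxB : x ∉ B := disjoint_left.1 hAB hxA
    simp [ofSubtype_subtypePerm_of_mem, ofSubtype_subtypePerm_of_not_mem, hxA, hxB]
  by_cases hxB : x ∈ B
  · have hπxA : π x ∉ A := disjoint_right.1 hAB ((hB x).2 hxB)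
    simp [ofSubtype_subtypePerm_of_mem, ofSubtype_subtypePerm_of_not_mem, hxA, hxB, hπxA]
  · simp [ofSubtype_subtypePerm_of_not_mem, hxA, hxB]

/-- For `π`-invariant `E` this is `-1` to the number of cycles of `π` on `E`. -/
noncomputable def signedSignOn (E : Finset S) : ℤ :=
  if h : ∀ x, π x ∈ E ↔ x ∈ E then (-1) ^ #E * (sign (π.subtypePerm h) : ℤ) else 0

theorem signedSignOn_empty : π.signedSignOn ∅ = 1 := by
  rw [signedSignOn, dif_pos (by simp), Subsingleton.elim (π.subtypePerm _) 1]
  simp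

variable [Fintype S]

theorem sign_subtypePerm_union {A B : Finset S} (hAB : _root_.Disjoint A B)
    (hA : ∀ x, π x ∈ A ↔ x ∈ A) (hB : ∀ x, π x ∈ B ↔ x ∈ B)
    (hU : ∀ x, π x ∈ A ∪ B ↔ x ∈ A ∪ B) :
    sign (π.subtypePerm hU) = sign (π.subtypePerm hA) * sign (π.subtypePerm hB) := by
  simpa using congrArg sign (π.ofSubtype_subtypePerm_union hAB hA hB hU)

theorem signedSignOn_union {A B : Finset S} (hAB : _root_.Disjoint A B)
    (hA : ∀ x, π x ∈ A ↔ x ∈ A) (hB : ∀ x, π x ∈ B ↔ x ∈ B) :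
    π.signedSignOn (A ∪ B) = π.signedSignOn A * π.signedSignOn B := by
  have hU : ∀ x, π x ∈ A ∪ B ↔ x ∈ A ∪ B := by simp [hA, hB]
  rw [signedSignOn, signedSignOn, signedSignOn, dif_pos hU, dif_pos hA, dif_pos hB,
    card_union_of_disjoint hAB, π.sign_subtypePerm_union hAB hA hB hU]
  push_cast
  ring

noncomputable def orbitFinset (a : S) : Finset S := {x | π.SameCycle a x}

@[simp]
theorem mem_orbitFinset {a x : S} : x ∈ π.orbitFinset a ↔ π.SameCycle a x := by
  simp [orbitFinset]

theorem apply_mem_orbitFinset {a x : S} : π x ∈ π.orbitFinset a ↔ x ∈ π.orbitFinset a := by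
  simp [sameCycle_apply_right]

theorem orbitFinset_subset {E : Finset S} (hE : ∀ x, π x ∈ E ↔ x ∈ E) {a : S} (ha : a ∈ E) :
    π.orbitFinset a ⊆ E :=
  fun _ hx => (((π.mem_orbitFinset).1 hx).iff_of_apply_iff hE).1 ha

theorem disjoint_orbitFinset {E : Finset S} (hE : ∀ x, π x ∈ E ↔ x ∈ E) {a : S} (ha : a ∉ E) :
    _root_.Disjoint E (π.orbitFinset a) :=
  disjoint_left.2 fun _ hxE hxO => ha ((((π.mem_orbitFinset).1 hxO).iff_of_apply_iff hE).2 hxE)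

theorem ofSubtype_subtypePerm_orbitFinset (a : S)
    (hO : ∀ x, π x ∈ π.orbitFinset a ↔ x ∈ π.orbitFinset a) :
    ofSubtype (π.subtypePerm hO) = π.cycleOf a := by
  ext x
  by_cases hx : π.SameCycle a x
  · simp [ofSubtype_subtypePerm_of_mem, cycleOf_apply, hx]
  · simp [ofSubtype_subtypePerm_of_not_mem, cycleOf_apply, hx]

theorem signedSignOn_orbitFinset (a : S) : π.signedSignOn (π.orbitFinset a) = -1 := by
  have hO : ∀ x, π x ∈ π.orbitFinset a ↔ x ∈ π.orbitFinset a := fun _ => π.apply_mem_orbitFinset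
  rw [signedSignOn, dif_pos hO, ← sign_ofSubtype, π.ofSubtype_subtypePerm_orbitFinset a hO]
  by_cases ha : π a = a
  · have hO_eq : π.orbitFinset a = {a} := by
      ext x
      simp only [mem_orbitFinset, mem_singleton]
      exact ⟨fun h => (h.eq_of_left ha).symm, fun h => h ▸ SameCycle.refl _ _⟩
    simp [hO_eq, (cycleOf_eq_one_iff π).2 ha]
  · have hsupp : (π.cycleOf a).support = π.orbitFinset a := by
      ext x
      simp [mem_support_cycleOf_iff' ha]
    rw [(π.isCycle_cycleOf ha).sign, hsupp]
    push_cast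
    rw [mul_neg, ← pow_add, Even.neg_one_pow ⟨_, rfl⟩]

theorem signedSignOn_symmDiff_orbitFinset (a : S) (E : Finset S) :
    π.signedSignOn (E ∆ π.orbitFinset a) = -π.signedSignOn E := by
  set O := π.orbitFinset a
  have hO : ∀ x, π x ∈ O ↔ x ∈ O := fun _ => π.apply_mem_orbitFinset
  by_cases hE : ∀ x, π x ∈ E ↔ x ∈ E
  · by_cases haE : a ∈ E
    · have hOE : O ⊆ E := π.orbitFinset_subset hE haE
      have hD : ∀ x, π x ∈ E \ O ↔ x ∈ E \ O := by simp only [mem_sdiff, hE, hO, implies_true]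
      rw [symmDiff_of_ge hOE]
      conv_rhs => rw [← sdiff_union_of_subset hOE, π.signedSignOn_union sdiff_disjoint hD hO,
        signedSignOn_orbitFinset]
      ring
    · have hEO : _root_.Disjoint E O := π.disjoint_orbitFinset hE haE
      rw [hEO.symmDiff_eq_sup, sup_eq_union, π.signedSignOn_union hEO hE hO,
        signedSignOn_orbitFinset]
      ring
  · have hEO : ¬∀ x, π x ∈ E ∆ O ↔ x ∈ E ∆ O := fun h => hE fun x => by
      have := h x
      rw [mem_symmDiff, mem_symmDiff, hO x] at this
      tauto
    rw [signedSignOn, signedSignOn, dif_neg hE, dif_neg hEO, neg_zero]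

theorem sum_signedSignOn_eq_zero [Nonempty S] : ∑ E : Finset S, π.signedSignOn E = 0 := by
  obtain ⟨a⟩ := ‹Nonempty S›
  have h := Fintype.sum_bijective _ (symmDiff_left_involutive (π.orbitFinset a)).bijective
    (fun E => π.signedSignOn (E ∆ π.orbitFinset a)) π.signedSignOn fun _ => rfl
  simp only [signedSignOn_symmDiff_orbitFinset, sum_neg_distrib] at h
  linarith

end Equiv.Perm

/-- for a permutation `π` of a nonempty finite set `S`, the alternating sum
`Σ (-1)^{|E|+1} sgn(π|_E)` over all nonempty `π`-invariant subsets `E ⊆ S` equals 1. -/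
theorem alternating_sum_sign_invariant_subsets {S : Type*} [Fintype S] [Nonempty S]
    (π : Equiv.Perm S) :
    (∑ E ∈ (Finset.univ : Finset S).powerset,
      if h : E.Nonempty ∧ ∀ x, x ∈ E ↔ π x ∈ E then
        ((-1 : ℤ) ^ (E.card + 1)) * (Equiv.Perm.sign (π.subtypePerm (fun x => (h.2 x).symm)) : ℤ)
      else 0) = 1 := by
  have hsummand : ∀ E : Finset S, (if h : E.Nonempty ∧ ∀ x, x ∈ E ↔ π x ∈ E then
        ((-1 : ℤ) ^ (E.card + 1)) * (Equiv.Perm.sign (π.subtypePerm (fun x => (h.2 x).symm)) : ℤ)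
      else 0) = -π.signedSignOn E + if E = ∅ then 1 else 0 := by
    intro E
    obtain rfl | hE := E.eq_empty_or_nonempty
    · simp [Equiv.Perm.signedSignOn_empty]
    rw [if_neg hE.ne_empty, add_zero, Equiv.Perm.signedSignOn]
    by_cases hinv : ∀ x, π x ∈ E ↔ x ∈ E
    · rw [dif_pos ⟨hE, fun x => (hinv x).symm⟩, dif_pos hinv, pow_succ]
      ring
    · rw [dif_neg fun h => hinv fun x => (h.2 x).symm, dif_neg hinv, neg_zero]
  simp [hsummand, sum_add_distrib, π.sum_signedSignOn_eq_zero]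
end

section
/- Let 𝒜 be a finite set, A and J zero-one 𝒜 × 𝒜 matrices with AJ = JAᵀ and J^{2r} = I (J the permutation matrix of τ_J). Let X_A be the topological Markov shift defined by A and φ_{J,A}(x)_i = τ_J(x_{-i}) the induced reversal. Then for all m ≥ 1 and 0 ≤ l < r, the number of points x ∈ X_A with σ^m(φ_{J,A}^{2l}(x)) = x equals tr(J^{2l} A^m). -/
open Matrix

/-- The shift map on `𝒜^ℤ`. -/
def shiftMap (𝒜 : Type*) : (ℤ → 𝒜) → (ℤ → 𝒜) := fun x i => x (i + 1)

/-- The one-block coordinate reversal induced by a symbol map `τ`. -/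
def revMap {𝒜 : Type*} (τ : 𝒜 → 𝒜) : (ℤ → 𝒜) → (ℤ → 𝒜) := fun x i => τ (x (-i))

/-!
The square of the reversal acts letterwise, `φ_{J,A}^{2l} x = π ∘ x` with `π = τ^{2l}`, so the
points in question are the admissible sequences with `π (x (i + m)) = x i`. The relation
`AJ = JAᵀ` says that `τ` reverses the edges of `A`, hence `π` is an automorphism of the graph
of `A`. Such a sequence is therefore determined by its word `x 0 … x m`, and every `A`-path of
length `m` from `π a` to `a` extends to one. Counting these paths by the entries of `A ^ m` gives
`∑ a, (A ^ m) (π a) a = tr (J ^ (2 * l) * A ^ m)`.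
-/

open Finset

section

variable {𝒜 R : Type*}

lemma shiftMap_iterate_apply (n : ℕ) (x : ℤ → 𝒜) (i : ℤ) :
    (shiftMap 𝒜)^[n] x i = x (i + n) := by
  induction n generalizing x with
  | zero => simp
  | succ n ih =>
    rw [Function.iterate_succ_apply, ih]
    simp [shiftMap, add_assoc]

lemma revMap_iterate_two_mul_apply (τ : 𝒜 → 𝒜) (l : ℕ) (x : ℤ → 𝒜) (i : ℤ) :
    (revMap τ)^[2 * l] x i = τ^[2 * l] (x i) := by
  induction l generalizing x with
  | zero => simp
  | succ l ih =>
    rw [mul_add, mul_one, Function.iterate_add_apply, ih, Function.iterate_add_apply]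
    simp [revMap]

namespace Matrix

variable {n : Type*}

def autGroup (A : Matrix n n R) : Subgroup (Equiv.Perm n) where
  carrier := {σ | ∀ a b, A (σ a) (σ b) = A a b}
  mul_mem' {σ τ} hσ hτ a b := (hσ _ _).trans (hτ a b)
  one_mem' _ _ := rfl
  inv_mem' {σ} hσ a b := by rw [← hσ]; simp

lemma mul_self_mem_autGroup {A : Matrix n n R} {σ : Equiv.Perm n}
    (h : ∀ a b, A (σ a) (σ b) = A b a) : σ * σ ∈ A.autGroup := fun a b => by
  simp only [Equiv.Perm.mul_apply, h]

section PermMatrix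

variable [Fintype n] [DecidableEq n]

lemma apply_perm_apply_perm_of_mul_permMatrix_eq [NonAssocSemiring R] {A : Matrix n n R}
    {σ : Equiv.Perm n} (h : A * σ.permMatrix R = σ.permMatrix R * Aᵀ) (a b : n) :
    A (σ a) (σ b) = A b a := by
  have hba := congr_fun₂ h b (σ a)
  rw [PEquiv.mul_toMatrix_toPEquiv, PEquiv.toMatrix_toPEquiv_mul] at hba
  simpa using hba.symm

lemma permMatrix_pow [Semiring R] (σ : Equiv.Perm n) (k : ℕ) :
    (σ ^ k).permMatrix R = σ.permMatrix R ^ k := by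
  induction k with
  | zero => simp
  | succ k ih => rw [pow_succ, permMatrix_mul, ih, pow_succ']

lemma trace_permMatrix_mul [NonAssocSemiring R] (σ : Equiv.Perm n) (M : Matrix n n R) :
    trace (σ.permMatrix R * M) = ∑ a, M (σ a) a := by
  simp [PEquiv.toMatrix_toPEquiv_mul, trace]

end PermMatrix

end Matrix

section Words

def IsAdmissibleWord [One R] (A : Matrix 𝒜 𝒜 R) {m : ℕ} (p : Fin (m + 1) → 𝒜) : Prop :=
  ∀ i : Fin m, A (p i.castSucc) (p i.succ) = 1

instance [One R] [DecidableEq R] {A : Matrix 𝒜 𝒜 R} {m : ℕ} (p : Fin (m + 1) → 𝒜) :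
    Decidable (IsAdmissibleWord A p) := by
  unfold IsAdmissibleWord; infer_instance

lemma isAdmissibleWord_cons [One R] {A : Matrix 𝒜 𝒜 R} {m : ℕ} {a : 𝒜}
    {q : Fin (m + 1) → 𝒜} :
    IsAdmissibleWord A (Fin.cons a q : Fin (m + 2) → 𝒜) ↔
      A a (q 0) = 1 ∧ IsAdmissibleWord A q := by
  simp [IsAdmissibleWord, Fin.forall_fin_succ (n := m)]

def admissibleWords [One R] [DecidableEq R] [Fintype 𝒜] [DecidableEq 𝒜] (A : Matrix 𝒜 𝒜 R)
    (m : ℕ) (a b : 𝒜) : Finset (Fin (m + 1) → 𝒜) :=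
  {p | p 0 = a ∧ p (Fin.last m) = b ∧ IsAdmissibleWord A p}

variable [Semiring R] [DecidableEq R] [Fintype 𝒜] [DecidableEq 𝒜] {A : Matrix 𝒜 𝒜 R}

lemma admissibleWords_zero (a b : 𝒜) :
    admissibleWords A 0 a b = if a = b then {fun _ => a} else ∅ := by
  ext p
  split_ifs with hab
  · subst hab
    simp [admissibleWords, IsAdmissibleWord, funext_iff, Fin.forall_fin_one]
  · simpa [admissibleWords, IsAdmissibleWord] using fun h => h ▸ hab

lemma mem_admissibleWords_succ {m : ℕ} {a b : 𝒜} {p : Fin (m + 2) → 𝒜} :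
    p ∈ admissibleWords A (m + 1) a b ↔
      p 0 = a ∧ A a (p 1) = 1 ∧ Fin.tail p ∈ admissibleWords A m (p 1) b := by
  conv_lhs => rw [← Fin.cons_self_tail p]
  simp only [admissibleWords, mem_filter, mem_univ, true_and, isAdmissibleWord_cons,
    Fin.cons_zero, ← Fin.succ_last, Fin.cons_succ]
  simp only [Fin.tail, Fin.succ_zero_eq_one, true_and]
  constructor
  · rintro ⟨rfl, hb, h1, hw⟩
    exact ⟨rfl, h1, hb, hw⟩
  · rintro ⟨rfl, h1, hb, hw⟩
    exact ⟨rfl, hb, h1, hw⟩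

lemma card_filter_admissibleWords_succ (m : ℕ) (a b c : 𝒜) :
    #{p ∈ admissibleWords A (m + 1) a b | p 1 = c} =
      if A a c = 1 then #(admissibleWords A m c b) else 0 := by
  split_ifs with hac
  · refine card_nbij' Fin.tail (fun q => (Fin.cons a q : Fin (m + 2) → 𝒜)) ?_ ?_ ?_ ?_
    · intro p hp
      simp only [coe_filter, Set.mem_ofPred_eq, mem_admissibleWords_succ] at hp
      obtain ⟨⟨-, -, hw⟩, rfl⟩ := hp
      exact hw
    · intro q hq
      have hq0 : q 0 = c := (mem_filter.1 hq).2.1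
      simpa [mem_admissibleWords_succ, hq0, hac] using hq
    · intro p hp
      simp only [coe_filter, Set.mem_ofPred_eq, mem_admissibleWords_succ] at hp
      simp [← hp.1.1]
    · intro q _
      exact Fin.tail_cons _ _
  · refine card_eq_zero.2 (filter_eq_empty_iff.2 fun p hp hpc => hac ?_)
    rw [mem_admissibleWords_succ] at hp
    exact hpc ▸ hp.1 ▸ hp.2.1

theorem pow_apply_eq_card_admissibleWords (hA : ∀ a b, A a b = 0 ∨ A a b = 1) (m : ℕ)
    (a b : 𝒜) : (A ^ m) a b = #(admissibleWords A m a b) := by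
  induction m generalizing a with
  | zero =>
    rw [admissibleWords_zero, pow_zero, one_apply]
    split_ifs <;> simp
  | succ m ih =>
    rw [card_eq_sum_card_fiberwise (f := fun p => p 1) (t := univ) fun _ _ => mem_univ _,
      pow_succ', mul_apply, Nat.cast_sum]
    refine sum_congr rfl fun c _ => ?_
    rw [card_filter_admissibleWords_succ, ih]
    by_cases h : A a c = 1
    · simp [h]
    · rw [if_neg h, (hA a c).resolve_right h]
      simp

end Words

def IsAdmissible [One R] (A : Matrix 𝒜 𝒜 R) (x : ℤ → 𝒜) : Prop :=
  ∀ i, A (x i) (x (i + 1)) = 1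

def IsTwistedPeriodic (π : Equiv.Perm 𝒜) (m : ℕ) (x : ℤ → 𝒜) : Prop :=
  ∀ i, π (x (i + m)) = x i

lemma exists_fin_coe_eq_emod {m : ℕ} (hm : 0 < m) (i : ℤ) : ∃ j : Fin m, (j : ℤ) = i % m := by
  have h0 := Int.emod_nonneg i (by omega : (m : ℤ) ≠ 0)
  have h1 := Int.emod_lt_of_pos i (by omega : (0 : ℤ) < m)
  exact ⟨⟨(i % m).toNat, by omega⟩, by simp [h0]⟩

namespace IsTwistedPeriodic

variable {π : Equiv.Perm 𝒜} {m : ℕ} {x y : ℤ → 𝒜}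

lemma zpow_apply_add_mul (hx : IsTwistedPeriodic π m x) (k i : ℤ) :
    (π ^ k) (x (i + k * m)) = x i := by
  induction k using Int.induction_on generalizing i with
  | zero => simp
  | succ k ih =>
    rw [_root_.zpow_add_one, Equiv.Perm.mul_apply, show i + (k + 1) * m = i + k * m + m by ring,
      hx, ih]
  | pred k ih =>
    rw [← hx, ← Equiv.Perm.mul_apply, ← _root_.zpow_add_one, sub_add_cancel,
      show i + (-k - 1) * m + m = i + -k * m by ring, ih]

lemma zpow_ediv_apply_add (hx : IsTwistedPeriodic π m x) (i c : ℤ) :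
    (π ^ (i / m)) (x (i + c)) = x (i % m + c) := by
  rw [← hx.zpow_apply_add_mul (i / m) (i % m + c)]
  congr 2
  linarith [Int.emod_add_ediv_mul i m]

lemma zpow_ediv_apply (hx : IsTwistedPeriodic π m x) (i : ℤ) :
    (π ^ (i / m)) (x i) = x (i % m) := by
  simpa using hx.zpow_ediv_apply_add i 0

lemma ext (hm : 0 < m) (hx : IsTwistedPeriodic π m x) (hy : IsTwistedPeriodic π m y)
    (h : ∀ j : Fin m, x j = y j) : x = y := by
  funext i
  apply (π ^ (i / m)).injective
  obtain ⟨j, hj⟩ := exists_fin_coe_eq_emod hm i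
  rw [hx.zpow_ediv_apply, hy.zpow_ediv_apply, ← hj, h]

lemma isAdmissible_iff [One R] {A : Matrix 𝒜 𝒜 R} (hπ : π ∈ A.autGroup) (hm : 0 < m)
    (hx : IsTwistedPeriodic π m x) :
    IsAdmissible A x ↔ ∀ j : Fin m, A (x j) (x (j + 1)) = 1 := by
  refine ⟨fun h j => h j, fun h i => ?_⟩
  obtain ⟨j, hj⟩ := exists_fin_coe_eq_emod hm i
  rw [← zpow_mem hπ (i / m), hx.zpow_ediv_apply, hx.zpow_ediv_apply_add, ← hj, h]

end IsTwistedPeriodic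

section TwistedExtension

variable {π : Equiv.Perm 𝒜} {m : ℕ}

-- The last letter of `p` is not read: it is recovered as `π⁻¹ (p 0)`.
def twistedExtension (π : Equiv.Perm 𝒜) (m : ℕ) (p : Fin (m + 1) → 𝒜) : ℤ → 𝒜 :=
  fun i => (π ^ (i / m))⁻¹ (p (Fin.ofNat (m + 1) (i % m).toNat))

lemma isTwistedPeriodic_twistedExtension (hm : 0 < m) (p : Fin (m + 1) → 𝒜) :
    IsTwistedPeriodic π m (twistedExtension π m p) := by
  intro i
  have hdiv : (i + m) / m = i / m + 1 := by
    simpa using Int.add_mul_ediv_right i 1 (by omega : (m : ℤ) ≠ 0)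
  simp [twistedExtension, hdiv, _root_.zpow_add_one]

lemma twistedExtension_apply_val (hm : 0 < m) {p : Fin (m + 1) → 𝒜}
    (hp : π (p (Fin.last m)) = p 0) (j : Fin (m + 1)) :
    twistedExtension π m p j = p j := by
  induction j using Fin.lastCases with
  | last => simp [twistedExtension, Int.ediv_self (by omega : (m : ℤ) ≠ 0), ← hp]
  | cast k =>
    have hk0 : (0 : ℤ) ≤ k := by positivity
    have hkm : (k : ℤ) < m := by exact_mod_cast k.isLt
    simp [twistedExtension, Int.ediv_eq_zero_of_lt hk0 hkm, Int.emod_eq_of_lt hk0 hkm]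

end TwistedExtension

section Counting

def twistedCycles [One R] [DecidableEq R] [Fintype 𝒜] [DecidableEq 𝒜] (A : Matrix 𝒜 𝒜 R)
    (π : Equiv.Perm 𝒜) (m : ℕ) : Finset (Fin (m + 1) → 𝒜) :=
  {p | IsAdmissibleWord A p ∧ π (p (Fin.last m)) = p 0}

variable [Semiring R] [DecidableEq R] [Fintype 𝒜] [DecidableEq 𝒜] {A : Matrix 𝒜 𝒜 R}
  {π : Equiv.Perm 𝒜} {m : ℕ}

theorem ncard_isAdmissible_isTwistedPeriodic (hπ : π ∈ A.autGroup) (hm : 0 < m) :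
    {x | IsAdmissible A x ∧ IsTwistedPeriodic π m x}.ncard = #(twistedCycles A π m) := by
  set initialWord : (ℤ → 𝒜) → Fin (m + 1) → 𝒜 := fun x j => x j
  have hinj : Set.InjOn initialWord {x | IsAdmissible A x ∧ IsTwistedPeriodic π m x} :=
    fun x hx y hy hxy => hx.2.ext hm hy.2 fun j => congrFun hxy j.castSucc
  rw [← hinj.ncard_image, ← Set.ncard_coe_finset]
  congr 1
  ext p
  simp only [twistedCycles, Set.mem_image, Set.mem_ofPred_eq, mem_coe, mem_filter, mem_univ,
    true_and]
  constructor
  · rintro ⟨x, ⟨hA, hx⟩, rfl⟩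
    exact ⟨fun i => by simpa [initialWord, Fin.val_succ] using hA i,
      by simpa [initialWord] using hx 0⟩
  · rintro ⟨hp, hpπ⟩
    have hext := twistedExtension_apply_val hm hpπ
    refine ⟨twistedExtension π m p, ⟨?_, isTwistedPeriodic_twistedExtension hm p⟩, funext hext⟩
    rw [(isTwistedPeriodic_twistedExtension hm p).isAdmissible_iff hπ hm]
    intro j
    have h0 := hext j.castSucc
    have h1 := hext j.succ
    push_cast [Fin.val_castSucc, Fin.val_succ] at h0 h1
    rw [h0, h1]
    exact hp j

lemma card_twistedCycles (m : ℕ) :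
    #(twistedCycles A π m) = ∑ a, #(admissibleWords A m (π a) a) := by
  rw [card_eq_sum_card_fiberwise (f := fun p => p (Fin.last m)) (t := univ)
    fun _ _ => mem_univ _]
  refine sum_congr rfl fun a _ => congrArg card ?_
  ext p
  simp only [twistedCycles, admissibleWords, mem_filter, mem_univ, true_and]
  constructor
  · rintro ⟨⟨hp, hπ⟩, rfl⟩
    exact ⟨hπ.symm, rfl, hp⟩
  · rintro ⟨h0, hlast, hp⟩
    exact ⟨⟨hp, by rw [hlast, h0]⟩, hlast⟩

end Counting

end

theorem fixed_points_eq_trace_general {𝒜 : Type*} [Fintype 𝒜] [DecidableEq 𝒜]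
    (A J : Matrix 𝒜 𝒜 ℤ) (τ : Equiv.Perm 𝒜)
    (hA01 : ∀ a b, A a b = 0 ∨ A a b = 1)
    (hJ : ∀ a b, J a b = if τ a = b then 1 else 0)
    (hAJ : A * J = J * Aᵀ)
    (m l : ℕ) (hm : 1 ≤ m) :
    (({x : ℤ → 𝒜 | (∀ i, A (x i) (x (i + 1)) = 1) ∧
        (shiftMap 𝒜)^[m] ((revMap ⇑τ)^[2 * l] x) = x}).ncard : ℤ) =
      Matrix.trace (J ^ (2 * l) * A ^ m) := by
  obtain rfl : J = τ.permMatrix ℤ := by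
    ext a b
    simp [hJ, PEquiv.toMatrix_apply]
  have hπ : τ ^ (2 * l) ∈ A.autGroup := by
    rw [pow_mul, sq]
    exact pow_mem (mul_self_mem_autGroup (apply_perm_apply_perm_of_mul_permMatrix_eq hAJ)) l
  have hfix : {x : ℤ → 𝒜 | (∀ i, A (x i) (x (i + 1)) = 1) ∧
      (shiftMap 𝒜)^[m] ((revMap ⇑τ)^[2 * l] x) = x} =
      {x | IsAdmissible A x ∧ IsTwistedPeriodic (τ ^ (2 * l)) m x} := by
    ext x
    simp [IsAdmissible, IsTwistedPeriodic, funext_iff, shiftMap_iterate_apply,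
      revMap_iterate_two_mul_apply, Equiv.Perm.coe_pow]
  rw [hfix, ncard_isAdmissible_isTwistedPeriodic hπ hm, card_twistedCycles, ← permMatrix_pow,
    trace_permMatrix_mul]
  push_cast
  exact sum_congr rfl fun a _ => (pow_apply_eq_card_admissibleWords hA01 m _ a).symm

/-- Theorem B: for a topological Markov shift `X_A` with reversal
`φ_{J,A}` induced by the permutation matrix `J` of `τ` (with `AJ = JAᵀ`, `J^{2r} = I`),
the number of points fixed by `σ^m ∘ φ_{J,A}^{2l}` equals `tr(J^{2l} A^m)`. -/
theorem fixed_points_eq_trace {𝒜 : Type*} [Fintype 𝒜] [DecidableEq 𝒜]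
    (A J : Matrix 𝒜 𝒜 ℤ) (τ : Equiv.Perm 𝒜) (r : ℕ) (hr : 1 ≤ r)
    (hA01 : ∀ a b, A a b = 0 ∨ A a b = 1)
    (hJ : ∀ a b, J a b = if τ a = b then 1 else 0)
    (hAJ : A * J = J * Aᵀ) (hJr : J ^ (2 * r) = 1)
    (m l : ℕ) (hm : 1 ≤ m) (hl : l < r) :
    (({x : ℤ → 𝒜 | (∀ i, A (x i) (x (i + 1)) = 1) ∧
        (shiftMap 𝒜)^[m] ((revMap ⇑τ)^[2 * l] x) = x}).ncard : ℤ) =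
      Matrix.trace (J ^ (2 * l) * A ^ m) :=
  fixed_points_eq_trace_general A J τ hA01 hJ hAJ m l hm
end

section
/- Let (X, σ_X) be a shift space and φ a one-block reversal of order 2r with symbol map τ (τ^{2r} = id, φ(x)_i = τ(x_{-i})). Define θ : X → (𝒜')^ℤ by θ(x)_i = (a_0,...,a_{2r-1}) with a_k = φ^k(x)_i for even k and a_k = φ^k(x)_{-i} for odd k, where 𝒜' is the set of realizable 2r-tuples. Then θ is injective and satisfies θ ∘ σ_X = σ ∘ θ and θ ∘ φ = Ψ ∘ θ, where Ψ(y)_i = τ'(y_{-i}) and τ' cyclically shifts tuples: τ'(a_0,...,a_{2r-1}) = (a_1,...,a_{2r-1},a_0). -/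
/-- The map `θ` sending `x` to the sequence of `2r`-tuples
`(a_0, …, a_{2r-1})` with `a_k = φ^k(x)_i` for even `k` and `a_k = φ^k(x)_{-i}`
for odd `k`, where `φ = revMap τ`. -/
def theta {𝒜 : Type*} (τ : 𝒜 → 𝒜) (r : ℕ) (x : ℤ → 𝒜) : ℤ → (ZMod (2 * r) → 𝒜) :=
  fun i k => if Even k.val then (revMap τ)^[k.val] x i else (revMap τ)^[k.val] x (-i)

/-- The cyclic shift of tuples: `τ'(a_0, …, a_{2r-1}) = (a_1, …, a_{2r-1}, a_0)`. -/
def tupCycle {𝒜 : Type*} (r : ℕ) : (ZMod (2 * r) → 𝒜) → (ZMod (2 * r) → 𝒜) :=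
  fun t k => t (k + 1)

/-- The one-block reversal `Ψ(y)_i = τ'(y_{-i})` on the full shift over tuples. -/
def PsiMap {𝒜 : Type*} (r : ℕ) : (ℤ → (ZMod (2 * r) → 𝒜)) → (ℤ → (ZMod (2 * r) → 𝒜)) :=
  fun y i => tupCycle r (y (-i))

lemma rev_iter {𝒜 : Type*} (τ : 𝒜 → 𝒜) (n : ℕ) (x : ℤ → 𝒜) (i : ℤ) :
    (revMap τ)^[n] x i = τ^[n] (x ((-1 : ℤ)^n * i)) := by
  induction n generalizing i with
  | zero => simp
  | succ n ih =>
    rw [Function.iterate_succ_apply', Function.iterate_succ_apply']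
    simp only [revMap, ih]
    ring_nf

lemma theta_eq {𝒜 : Type*} (τ : 𝒜 → 𝒜) (r : ℕ) (x : ℤ → 𝒜) (i : ℤ) (k : ZMod (2 * r)) :
    theta τ r x i k = τ^[k.val] (x i) := by
  unfold theta
  split_ifs with h
  · rw [rev_iter, h.neg_one_pow, one_mul]
  · rw [rev_iter, (Nat.odd_iff.mpr (Nat.not_even_iff.mp h)).neg_one_pow]
    ring_nf

/-- if `φ` is a one-block reversal of order `2r` with symbol map `τ` on a
shift space `X`, then `θ` is injective on `X`, intertwines the shifts, and intertwines
`φ` with `Ψ`. -/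
theorem theta_is_conjugacy {𝒜 : Type*} [Fintype 𝒜] (r : ℕ) (hr : 1 ≤ r)
    (τ : 𝒜 → 𝒜) (hτ : (τ)^[2 * r] = id)
    (X : Set (ℤ → 𝒜))
    (hXshift : ∀ x ∈ X, shiftMap 𝒜 x ∈ X ∧ (fun i => x (i - 1)) ∈ X)
    (hXrev : ∀ x ∈ X, revMap τ x ∈ X) :
    Set.InjOn (theta τ r) X ∧
    (∀ x ∈ X, theta τ r (shiftMap 𝒜 x) = shiftMap (ZMod (2 * r) → 𝒜) (theta τ r x)) ∧
    (∀ x ∈ X, theta τ r (revMap τ x) = PsiMap r (theta τ r x)) := by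

  have h2r : 0 < 2 * r := by omega
  haveI : NeZero (2 * r) := ⟨by omega⟩
  haveI : Fact (1 < 2 * r) := ⟨by omega⟩
  refine ⟨?_, ?_, ?_⟩
  · intro x _ y _ h
    funext i
    have := congrFun (congrFun h i) 0
    simpa [theta_eq, ZMod.val_zero] using this
  · intro x _
    funext i k
    simp [theta_eq, shiftMap]
  · intro x _
    funext i k
    simp only [theta_eq, PsiMap, tupCycle, revMap, ← Function.iterate_succ_apply τ]
    have hval : (k + 1).val = (k.val + 1) % (2 * r) := by
      rw [ZMod.val_add, ZMod.val_one]
    rw [hval]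
    rcases Nat.lt_or_ge (k.val + 1) (2 * r) with h | h
    · rw [Nat.mod_eq_of_lt h]
    · have hk : k.val + 1 = 2 * r := by have := ZMod.val_lt k; omega
      simp [Nat.succ_eq_add_one, hk, Nat.mod_self, hτ]
end

section
/- Let r be a positive integer, and for each divisor structure consider the family ℱ₁ = {⟨a^m b^{2l}, b^{2k}⟩ : m > 0, 0 ≤ l < k ≤ r, k | r} and ℱ₂ = {⟨a^m, a^j b^{2k-1}⟩ : m > 0, 0 ≤ j < m, (2k-1) | r} of subgroups of G_{2r} = ⟨a, b : ab = ba⁻¹, b^{2r} = 1⟩. Then every finite-index subgroup of G_{2r} belongs to ℱ₁ ∪ ℱ₂, and ℱ₁ ∩ ℱ₂ = ∅. -/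
namespace GAux

variable {r : ℕ}

lemma mk_rel1 : (gb r)⁻¹ * ga r * gb r * ga r = 1 := by
  have hmem : ((FreeGroup.of 1)⁻¹ * FreeGroup.of 0 * FreeGroup.of 1 * FreeGroup.of 0 :
      FreeGroup (Fin 2)) ∈ Subgroup.normalClosure (GRels r) :=
    Subgroup.subset_normalClosure (Set.mem_insert _ _)
  have h : (PresentedGroup.mk (GRels r))
      ((FreeGroup.of 1)⁻¹ * FreeGroup.of 0 * FreeGroup.of 1 * FreeGroup.of 0) = 1 :=
    (QuotientGroup.eq_one_iff _).mpr hmem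
  simpa [ga, gb, PresentedGroup.of, map_mul, map_inv] using h

lemma mk_rel2 : gb r ^ (2 * r) = 1 := by
  have hmem : ((FreeGroup.of 1 : FreeGroup (Fin 2)) ^ (2 * r))
      ∈ Subgroup.normalClosure (GRels r) :=
    Subgroup.subset_normalClosure (Set.mem_insert_of_mem _ rfl)
  have h : (PresentedGroup.mk (GRels r)) ((FreeGroup.of 1 : FreeGroup (Fin 2)) ^ (2 * r)) = 1 :=
    (QuotientGroup.eq_one_iff _).mpr hmem
  simpa [gb, PresentedGroup.of, map_pow] using h

lemma rel1' : (gb r)⁻¹ * ga r * gb r = (ga r)⁻¹ := by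
  have h := mk_rel1 (r := r)
  calc (gb r)⁻¹ * ga r * gb r = ((gb r)⁻¹ * ga r * gb r * ga r) * (ga r)⁻¹ := by group
    _ = (ga r)⁻¹ := by rw [h]; group

lemma conjR (i : ℤ) : (gb r)⁻¹ * ga r ^ i * gb r = ga r ^ (-i) := by
  have h : ((gb r)⁻¹ * ga r * ((gb r)⁻¹)⁻¹) ^ i = (gb r)⁻¹ * ga r ^ i * ((gb r)⁻¹)⁻¹ :=
    conj_zpow
  rw [inv_inv] at h
  rw [← h, rel1', inv_zpow]
  exact (zpow_neg _ _).symm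

lemma ga_zpow_mul_gb (i : ℤ) : ga r ^ i * gb r = gb r * ga r ^ (-i) := by
  have h := conjR (r := r) i
  calc ga r ^ i * gb r = gb r * ((gb r)⁻¹ * ga r ^ i * gb r) := by group
    _ = gb r * ga r ^ (-i) := by rw [h]

lemma gb_mul_ga_zpow (i : ℤ) : gb r * ga r ^ i = ga r ^ (-i) * gb r := by
  have h := ga_zpow_mul_gb (r := r) (-i)
  rw [neg_neg] at h
  exact h.symm

lemma comm_sq : Commute (ga r) (gb r * gb r) := by
  have h1 : ga r * gb r = gb r * (ga r)⁻¹ := by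
    simpa using ga_zpow_mul_gb (r := r) 1
  have h2 : (ga r)⁻¹ * gb r = gb r * ga r := by
    simpa using ga_zpow_mul_gb (r := r) (-1)
  show ga r * (gb r * gb r) = (gb r * gb r) * ga r
  calc ga r * (gb r * gb r) = (ga r * gb r) * gb r := by rw [mul_assoc]
    _ = gb r * ((ga r)⁻¹ * gb r) := by rw [h1, mul_assoc]
    _ = gb r * (gb r * ga r) := by rw [h2]
    _ = (gb r * gb r) * ga r := by rw [mul_assoc]

lemma comm_sq' : Commute (ga r) (gb r ^ (2 : ℤ)) := by
  have h : gb r ^ (2 : ℤ) = gb r * gb r := by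
    rw [show (2 : ℤ) = 1 + 1 by norm_num, zpow_add, zpow_one]
  rw [h]
  exact comm_sq

lemma swap_even {j : ℤ} (hj : Even j) (i : ℤ) :
    gb r ^ j * ga r ^ i = ga r ^ i * gb r ^ j := by
  obtain ⟨t, rfl⟩ := hj
  have hb : gb r ^ (t + t) = (gb r ^ (2 : ℤ)) ^ t := by
    rw [← zpow_mul]
    congr 1
    ring
  rw [hb]
  exact ((comm_sq' (r := r)).symm.zpow_zpow t i).eq

lemma swap_odd {j : ℤ} (hj : Odd j) (i : ℤ) :
    gb r ^ j * ga r ^ i = ga r ^ (-i) * gb r ^ j := by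
  obtain ⟨t, rfl⟩ := hj
  have he : Even (2 * t) := ⟨t, two_mul t⟩
  calc gb r ^ (2 * t + 1) * ga r ^ i
      = gb r ^ (2 * t) * (gb r * ga r ^ i) := by
        rw [zpow_add, zpow_one, mul_assoc]
    _ = gb r ^ (2 * t) * (ga r ^ (-i) * gb r) := by rw [gb_mul_ga_zpow]
    _ = (gb r ^ (2 * t) * ga r ^ (-i)) * gb r := by rw [mul_assoc]
    _ = (ga r ^ (-i) * gb r ^ (2 * t)) * gb r := by rw [swap_even he]
    _ = ga r ^ (-i) * gb r ^ (2 * t + 1) := by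
        rw [mul_assoc]
        congr 1
        rw [zpow_add, zpow_one]

lemma commute_mul_zpow {G : Type*} [Group G] {a b : G} (h : Commute a b) (s : ℤ) :
    (a * b) ^ s = a ^ s * b ^ s := by
  obtain ⟨n, rfl | rfl⟩ := s.eq_nat_or_neg
  · rw [zpow_natCast, zpow_natCast, zpow_natCast, h.mul_pow]
  · rw [zpow_neg, zpow_neg, zpow_neg, zpow_natCast, zpow_natCast, zpow_natCast, h.mul_pow,
      mul_inv_rev]
    exact ((h.pow_pow n n).inv_inv).symm.eq

/-- Normal-form existence. -/
lemma exists_nf (g : GGrp r) : ∃ i j : ℤ, g = ga r ^ i * gb r ^ j := by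
  let H : Subgroup (GGrp r) :=
    { carrier := {g | ∃ i j : ℤ, g = ga r ^ i * gb r ^ j}
      one_mem' := ⟨0, 0, by simp⟩
      mul_mem' := by
        rintro x y ⟨i, j, rfl⟩ ⟨i', j', rfl⟩
        rcases Int.even_or_odd j with hj | hj
        · refine ⟨i + i', j + j', ?_⟩
          calc (ga r ^ i * gb r ^ j) * (ga r ^ i' * gb r ^ j')
              = ga r ^ i * ((gb r ^ j * ga r ^ i') * gb r ^ j') := by group
            _ = ga r ^ i * ((ga r ^ i' * gb r ^ j) * gb r ^ j') := by rw [swap_even hj]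
            _ = ga r ^ (i + i') * gb r ^ (j + j') := by rw [zpow_add, zpow_add]; group
        · refine ⟨i + -i', j + j', ?_⟩
          calc (ga r ^ i * gb r ^ j) * (ga r ^ i' * gb r ^ j')
              = ga r ^ i * ((gb r ^ j * ga r ^ i') * gb r ^ j') := by group
            _ = ga r ^ i * ((ga r ^ (-i') * gb r ^ j) * gb r ^ j') := by rw [swap_odd hj]
            _ = ga r ^ (i + -i') * gb r ^ (j + j') := by rw [zpow_add, zpow_add]; group
      inv_mem' := by
        rintro x ⟨i, j, rfl⟩
        rcases Int.even_or_odd j with hj | hj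
        · refine ⟨-i, -j, ?_⟩
          calc (ga r ^ i * gb r ^ j)⁻¹ = gb r ^ (-j) * ga r ^ (-i) := by
                rw [mul_inv_rev, ← zpow_neg, ← zpow_neg]
            _ = ga r ^ (-i) * gb r ^ (-j) := swap_even hj.neg (-i)
        · refine ⟨i, -j, ?_⟩
          calc (ga r ^ i * gb r ^ j)⁻¹ = gb r ^ (-j) * ga r ^ (-i) := by
                rw [mul_inv_rev, ← zpow_neg, ← zpow_neg]
            _ = ga r ^ i * gb r ^ (-j) := by rw [swap_odd hj.neg, neg_neg] }
  have hg : g ∈ H := by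
    refine PresentedGroup.generated_by _ H (fun x => ?_) g
    fin_cases x
    · exact ⟨1, 0, by simp [ga]⟩
    · exact ⟨0, 1, by simp [gb]⟩
  exact hg

lemma zmod2_even (x : ℕ) : ((2 * x : ℕ) : ZMod 2) = 0 := by
  rw [Nat.cast_mul, ZMod.natCast_self, zero_mul]

lemma zmod2_odd (x : ℕ) : ((2 * x + 1 : ℕ) : ZMod 2) = 1 := by
  rw [Nat.cast_add, Nat.cast_mul, ZMod.natCast_self, zero_mul, zero_add, Nat.cast_one]

/-- the parity morphism. -/
def par (r : ℕ) : GGrp r →* Multiplicative (ZMod 2) :=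
  PresentedGroup.toGroup (f := ![1, Multiplicative.ofAdd (1 : ZMod 2)]) (by
    intro x hx
    simp only [GRels, Set.mem_insert_iff, Set.mem_singleton_iff] at hx
    rcases hx with rfl | rfl
    · simp
    · rw [map_pow]
      have h1 : (FreeGroup.lift ![1, Multiplicative.ofAdd (1 : ZMod 2)]) (FreeGroup.of 1) =
          Multiplicative.ofAdd (1 : ZMod 2) := by simp
      rw [h1, ← ofAdd_nsmul]
      have h2 : (2 * r) • (1 : ZMod 2) = 0 := by
        rw [nsmul_eq_mul, mul_one, zmod2_even]
      rw [h2, ofAdd_zero])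

lemma par_ga : par r (ga r) = 1 := by
  simp [par, ga, PresentedGroup.toGroup.of]

lemma par_gb : par r (gb r) = Multiplicative.ofAdd (1 : ZMod 2) := by
  simp [par, gb, PresentedGroup.toGroup.of]

lemma par_nf (i j : ℤ) : par r (ga r ^ i * gb r ^ j) = Multiplicative.ofAdd ((j : ZMod 2)) := by
  rw [map_mul, map_zpow, map_zpow, par_ga, par_gb, one_zpow, one_mul, ← ofAdd_zsmul]
  congr 1
  rw [zsmul_eq_mul, mul_one]

lemma mem_closure_int {a x : ℤ} : x ∈ AddSubgroup.closure ({a} : Set ℤ) ↔ a ∣ x := by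
  rw [AddSubgroup.mem_closure_singleton]
  constructor
  · rintro ⟨n, rfl⟩
    exact Dvd.intro_left n (by rw [smul_eq_mul])
  · rintro ⟨c, rfl⟩
    exact ⟨c, by rw [smul_eq_mul, mul_comm]⟩

end GAux

open GAux in
/-- every finite-index subgroup of `G_{2r}` belongs to
`ℱ₁ = {⟨a^m b^{2l}, b^{2k}⟩ : m > 0, 0 ≤ l < k ≤ r, k ∣ r}` or
`ℱ₂ = {⟨a^m, a^j b^{2k-1}⟩ : m > 0, 0 ≤ j < m, (2k-1) ∣ r}`, and these two
families are disjoint. -/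
theorem finite_index_subgroups_decomposition (r : ℕ) (hr : 1 ≤ r) :
    (∀ K : Subgroup (GGrp r), K.index ≠ 0 →
      (∃ m k l : ℕ, 1 ≤ m ∧ l < k ∧ k ≤ r ∧ k ∣ r ∧
        K = Subgroup.closure {ga r ^ m * gb r ^ (2 * l), gb r ^ (2 * k)}) ∨
      (∃ m k j : ℕ, 1 ≤ m ∧ 1 ≤ k ∧ j < m ∧ (2 * k - 1) ∣ r ∧
        K = Subgroup.closure {ga r ^ m, ga r ^ j * gb r ^ (2 * k - 1)})) ∧
    (∀ K : Subgroup (GGrp r),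
      ¬ ((∃ m k l : ℕ, 1 ≤ m ∧ l < k ∧ k ≤ r ∧ k ∣ r ∧
          K = Subgroup.closure {ga r ^ m * gb r ^ (2 * l), gb r ^ (2 * k)}) ∧
         (∃ m k j : ℕ, 1 ≤ m ∧ 1 ≤ k ∧ j < m ∧ (2 * k - 1) ∣ r ∧
          K = Subgroup.closure {ga r ^ m, ga r ^ j * gb r ^ (2 * k - 1)}))) := by
  constructor
  · -- classification
    intro K hK
    obtain ⟨n, hn0, -, hgan⟩ := Subgroup.exists_pow_mem_of_index_ne_zero hK (ga r)
    -- the subgroup of pure `ga`-exponents of `K`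
    let A : AddSubgroup ℤ :=
      { carrier := {i | ga r ^ i ∈ K}
        zero_mem' := by
          simp only [Set.mem_setOf_eq, zpow_zero]
          exact K.one_mem
        add_mem' := by
          intro x y hx hy
          have := K.mul_mem hx hy
          rwa [← zpow_add] at this
        neg_mem' := by
          intro x hx
          have := K.inv_mem hx
          rwa [← zpow_neg] at this }
    obtain ⟨m₀, hA⟩ := Int.subgroup_cyclic A
    have hmemA : ∀ i : ℤ, ga r ^ i ∈ K ↔ m₀ ∣ i := by
      intro i
      rw [← mem_closure_int, ← hA]
      exact Iff.rfl
    have hnA : ga r ^ ((n : ℕ) : ℤ) ∈ K := by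
      rw [zpow_natCast]
      exact hgan
    have hm₀ : m₀ ≠ 0 := by
      intro h
      have hd := (hmemA ((n : ℕ) : ℤ)).mp hnA
      rw [h] at hd
      have : ((n : ℕ) : ℤ) = 0 := zero_dvd_iff.mp hd
      omega
    set m : ℕ := m₀.natAbs with hm
    have hm1 : 1 ≤ m := by
      have := Int.natAbs_pos.mpr hm₀
      omega
    have hmdvd : ∀ i : ℤ, ga r ^ i ∈ K ↔ (m : ℤ) ∣ i := by
      intro i
      rw [hmemA, hm, Int.natAbs_dvd]
    have hgam : ga r ^ ((m : ℕ) : ℤ) ∈ K := (hmdvd _).mpr dvd_rfl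
    by_cases hodd : ∃ g ∈ K, ∃ i j : ℤ, Odd j ∧ g = ga r ^ i * gb r ^ j
    · -- family ℱ₂
      right
      -- D : all b-exponents appearing in K
      let D : AddSubgroup ℤ :=
        { carrier := {j | ∃ i : ℤ, ga r ^ i * gb r ^ j ∈ K}
          zero_mem' := ⟨0, by
            simp only [zpow_zero, mul_one]
            exact K.one_mem⟩
          add_mem' := by
            rintro x y ⟨i, hi⟩ ⟨i', hi'⟩
            rcases Int.even_or_odd x with hx | hx
            · refine ⟨i + i', ?_⟩
              have hmul := K.mul_mem hi hi'
              have heq : (ga r ^ i * gb r ^ x) * (ga r ^ i' * gb r ^ y)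
                  = ga r ^ (i + i') * gb r ^ (x + y) := by
                calc (ga r ^ i * gb r ^ x) * (ga r ^ i' * gb r ^ y)
                    = ga r ^ i * ((gb r ^ x * ga r ^ i') * gb r ^ y) := by group
                  _ = ga r ^ i * ((ga r ^ i' * gb r ^ x) * gb r ^ y) := by rw [swap_even hx]
                  _ = ga r ^ (i + i') * gb r ^ (x + y) := by rw [zpow_add, zpow_add]; group
              rwa [heq] at hmul
            · refine ⟨i + -i', ?_⟩
              have hmul := K.mul_mem hi hi'
              have heq : (ga r ^ i * gb r ^ x) * (ga r ^ i' * gb r ^ y)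
                  = ga r ^ (i + -i') * gb r ^ (x + y) := by
                calc (ga r ^ i * gb r ^ x) * (ga r ^ i' * gb r ^ y)
                    = ga r ^ i * ((gb r ^ x * ga r ^ i') * gb r ^ y) := by group
                  _ = ga r ^ i * ((ga r ^ (-i') * gb r ^ x) * gb r ^ y) := by rw [swap_odd hx]
                  _ = ga r ^ (i + -i') * gb r ^ (x + y) := by rw [zpow_add, zpow_add]; group
              rwa [heq] at hmul
          neg_mem' := by
            rintro x ⟨i, hi⟩
            rcases Int.even_or_odd x with hx | hx
            · refine ⟨-i, ?_⟩
              have hinv := K.inv_mem hi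
              have heq : (ga r ^ i * gb r ^ x)⁻¹ = ga r ^ (-i) * gb r ^ (-x) := by
                calc (ga r ^ i * gb r ^ x)⁻¹ = gb r ^ (-x) * ga r ^ (-i) := by
                      rw [mul_inv_rev, ← zpow_neg, ← zpow_neg]
                  _ = ga r ^ (-i) * gb r ^ (-x) := swap_even hx.neg (-i)
              rwa [heq] at hinv
            · refine ⟨i, ?_⟩
              have hinv := K.inv_mem hi
              have heq : (ga r ^ i * gb r ^ x)⁻¹ = ga r ^ i * gb r ^ (-x) := by
                calc (ga r ^ i * gb r ^ x)⁻¹ = gb r ^ (-x) * ga r ^ (-i) := by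
                      rw [mul_inv_rev, ← zpow_neg, ← zpow_neg]
                  _ = ga r ^ i * gb r ^ (-x) := by rw [swap_odd hx.neg, neg_neg]
              rwa [heq] at hinv }
      obtain ⟨d₀, hD⟩ := Int.subgroup_cyclic D
      have hmemD : ∀ j : ℤ, (∃ i : ℤ, ga r ^ i * gb r ^ j ∈ K) ↔ d₀ ∣ j := by
        intro j
        rw [← mem_closure_int, ← hD]
        exact Iff.rfl
      obtain ⟨g₀, hg₀K, i₀, j₀, hj₀odd, rfl⟩ := hodd
      have hd₀j₀ : d₀ ∣ j₀ := (hmemD j₀).mp ⟨i₀, hg₀K⟩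
      have hd₀odd : Odd d₀ := by
        obtain ⟨c, hc⟩ := hd₀j₀
        subst hc
        by_contra h
        rw [Int.not_odd_iff_even] at h
        exact (Int.not_odd_iff_even.mpr (h.mul_right c)) hj₀odd
      have h2rD : d₀ ∣ (2 * r : ℤ) := by
        refine (hmemD _).mp ⟨0, ?_⟩
        have h1 : gb r ^ ((2 * r : ℤ)) = 1 := by
          rw [show ((2 * r : ℤ)) = ((2 * r : ℕ) : ℤ) by push_cast; ring, zpow_natCast]
          exact mk_rel2
        rw [zpow_zero, one_mul, h1]
        exact K.one_mem
      set d : ℕ := d₀.natAbs with hd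
      have hddvd : ∀ j : ℤ, (∃ i : ℤ, ga r ^ i * gb r ^ j ∈ K) ↔ (d : ℤ) ∣ j := by
        intro j
        rw [hmemD, hd, Int.natAbs_dvd]
      have hdodd : Odd d := Int.natAbs_odd.mpr hd₀odd
      have hd2r : d ∣ 2 * r := by
        have h := Int.natAbs_dvd_natAbs.mpr h2rD
        rwa [show ((2 * r : ℤ)).natAbs = 2 * r by
          rw [show ((2 * r : ℤ)) = ((2 * r : ℕ) : ℤ) by push_cast; ring, Int.natAbs_natCast]] at h
      have hcop : Nat.Coprime d 2 := by
        rcases Nat.coprime_or_dvd_of_prime Nat.prime_two d with h | h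
        · exact Nat.coprime_comm.mp h
        · exact absurd hdodd (by
            rw [Nat.odd_iff]
            omega)
      have hdr : d ∣ r := (hcop.dvd_mul_left).mp hd2r
      have hd1 : 1 ≤ d := by
        rcases hdodd with ⟨c, hc⟩
        omega
      -- witness with b-exponent exactly d
      obtain ⟨i₁, hi₁⟩ := (hddvd ((d : ℕ) : ℤ)).mpr dvd_rfl
      set j : ℤ := i₁ % (m : ℤ) with hjdef
      have hmpos : (0 : ℤ) < (m : ℤ) := by exact_mod_cast hm1
      have hj0 : 0 ≤ j := Int.emod_nonneg _ (ne_of_gt hmpos)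
      have hjlt : j < (m : ℤ) := Int.emod_lt_of_pos _ hmpos
      have hdiffA : ga r ^ (j - i₁) ∈ K := by
        rw [hmdvd]
        have h : (m : ℤ) ∣ i₁ - j := Int.dvd_self_sub_of_emod_eq rfl
        exact (dvd_sub_comm).mp h
      have hcK : ga r ^ j * gb r ^ ((d : ℕ) : ℤ) ∈ K := by
        have h := K.mul_mem hdiffA hi₁
        rwa [← mul_assoc, ← zpow_add, sub_add_cancel] at h
      have hdoddZ : Odd ((d : ℕ) : ℤ) := by
        exact_mod_cast hdodd
      have hdk : 2 * ((d + 1) / 2) - 1 = d := by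
        rcases hdodd with ⟨c, hc⟩
        omega
      refine ⟨m, (d + 1) / 2, j.toNat, hm1, by omega, ?_, ?_, ?_⟩
      · have h := Int.toNat_of_nonneg hj0
        omega
      · rw [hdk]
        exact hdr
      rw [hdk]
      have hgen1 : ga r ^ (m : ℕ) = ga r ^ ((m : ℕ) : ℤ) := (zpow_natCast _ _).symm
      have hgen2 : ga r ^ j.toNat * gb r ^ (d : ℕ) = ga r ^ j * gb r ^ ((d : ℕ) : ℤ) := by
        rw [← zpow_natCast (ga r), ← zpow_natCast (gb r), Int.toNat_of_nonneg hj0]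
      -- the power formula for c = ga^j * gb^d
      set c : GGrp r := ga r ^ j * gb r ^ ((d : ℕ) : ℤ) with hcdef
      have hc2 : c ^ (2 : ℤ) = gb r ^ (2 * ((d : ℕ) : ℤ)) := by
        have hsw : gb r ^ ((d : ℕ) : ℤ) * ga r ^ j = ga r ^ (-j) * gb r ^ ((d : ℕ) : ℤ) :=
          swap_odd hdoddZ j
        calc c ^ (2 : ℤ) = (ga r ^ j * gb r ^ ((d : ℕ) : ℤ)) * (ga r ^ j * gb r ^ ((d : ℕ) : ℤ)) := by
              rw [hcdef]
              rw [show (2 : ℤ) = 1 + 1 by norm_num, zpow_add, zpow_one]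
          _ = ga r ^ j * ((gb r ^ ((d : ℕ) : ℤ) * ga r ^ j) * gb r ^ ((d : ℕ) : ℤ)) := by group
          _ = ga r ^ j * ((ga r ^ (-j) * gb r ^ ((d : ℕ) : ℤ)) * gb r ^ ((d : ℕ) : ℤ)) := by
              rw [hsw]
          _ = (ga r ^ j * ga r ^ (-j)) * (gb r ^ ((d : ℕ) : ℤ) * gb r ^ ((d : ℕ) : ℤ)) := by group
          _ = gb r ^ (2 * ((d : ℕ) : ℤ)) := by
              rw [← zpow_add, add_neg_cancel, zpow_zero, one_mul, ← zpow_add]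
              congr 1
              ring
      have hcpow : ∀ s : ℤ, c ^ s = ga r ^ (if Even s then 0 else j) * gb r ^ (((d : ℕ) : ℤ) * s) := by
        intro s
        rcases Int.even_or_odd s with hs | hs
        · obtain ⟨t, rfl⟩ := hs
          rw [if_pos ⟨t, rfl⟩, zpow_zero, one_mul]
          have h1 : c ^ (t + t) = (c ^ (2 : ℤ)) ^ t := by
            rw [← zpow_mul]
            congr 1
            ring
          rw [h1, hc2, ← zpow_mul]
          congr 1
          ring
        · obtain ⟨t, rfl⟩ := hs
          rw [if_neg (fun h => (Int.even_add_one.mp h) ⟨t, by ring⟩)]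
          have h1 : c ^ (2 * t + 1) = (c ^ (2 : ℤ)) ^ t * c := by
            rw [← zpow_mul, zpow_add, zpow_one]
          have he : Even (2 * ((d : ℕ) : ℤ) * t) := ⟨((d : ℕ) : ℤ) * t, by ring⟩
          rw [h1, hc2, ← zpow_mul, hcdef, ← mul_assoc, swap_even he j, mul_assoc, ← zpow_add]
          congr 1
          ring
      apply le_antisymm
      · -- K ≤ closure
        intro g hg
        obtain ⟨i, jx, rfl⟩ := exists_nf g
        obtain ⟨s, hs⟩ : ((d : ℕ) : ℤ) ∣ jx := (hddvd jx).mp ⟨i, hg⟩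
        subst hs
        have hcs : c ^ s = ga r ^ (if Even s then 0 else j) * gb r ^ (((d : ℕ) : ℤ) * s) := hcpow s
        set ε : ℤ := if Even s then 0 else j with hε
        have heq : (ga r ^ i * gb r ^ (((d : ℕ) : ℤ) * s)) * (c ^ s)⁻¹ = ga r ^ (i - ε) := by
          rw [hcs]
          calc (ga r ^ i * gb r ^ (((d : ℕ) : ℤ) * s)) *
                (ga r ^ ε * gb r ^ (((d : ℕ) : ℤ) * s))⁻¹
              = ga r ^ i * (gb r ^ (((d : ℕ) : ℤ) * s) *
                  (gb r ^ (((d : ℕ) : ℤ) * s))⁻¹) * (ga r ^ ε)⁻¹ := by group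
            _ = ga r ^ i * (ga r ^ ε)⁻¹ := by rw [mul_inv_cancel, mul_one]
            _ = ga r ^ (i - ε) := by rw [← zpow_neg, ← zpow_add, sub_eq_add_neg]
        have hKi : ga r ^ (i - ε) ∈ K := by
          rw [← heq]
          exact K.mul_mem hg (K.inv_mem (Subgroup.zpow_mem K hcK s))
        obtain ⟨u, hu⟩ := (hmdvd (i - ε)).mp hKi
        have hgexp : ga r ^ i * gb r ^ (((d : ℕ) : ℤ) * s) = (ga r ^ ((m : ℕ) : ℤ)) ^ u * c ^ s := by
          rw [hcs, ← zpow_mul, ← mul_assoc, ← zpow_add]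
          have e1 : i = (m : ℤ) * u + ε := by omega
          rw [e1]
        rw [hgexp]
        refine Subgroup.mul_mem _ (Subgroup.zpow_mem _ ?_ u) (Subgroup.zpow_mem _ ?_ s)
        · rw [← hgen1]
          exact Subgroup.subset_closure (Set.mem_insert _ _)
        · rw [← hgen2]
          exact Subgroup.subset_closure (Set.mem_insert_of_mem _ rfl)
      · -- closure ≤ K
        rw [Subgroup.closure_le]
        intro x hx
        simp only [Set.mem_insert_iff, Set.mem_singleton_iff] at hx
        rcases hx with rfl | rfl
        · rw [SetLike.mem_coe, hgen1]
          exact hgam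
        · rw [SetLike.mem_coe, hgen2]
          exact hcK
    · -- family ℱ₁
      left
      have heven : ∀ g ∈ K, ∀ i jx : ℤ, g = ga r ^ i * gb r ^ jx → Even jx := by
        intro g hg i jx hgx
        rcases Int.even_or_odd jx with h | h
        · exact h
        · exact absurd ⟨g, hg, i, jx, h, hgx⟩ hodd
      -- L : exponents t with gb^(2t) ∈ K
      let L : AddSubgroup ℤ :=
        { carrier := {t | gb r ^ (2 * t) ∈ K}
          zero_mem' := by
            simp only [Set.mem_setOf_eq, mul_zero, zpow_zero]
            exact K.one_mem
          add_mem' := by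
            intro x y hx hy
            have h := K.mul_mem hx hy
            rwa [← zpow_add, ← mul_add] at h
          neg_mem' := by
            intro x hx
            have h := K.inv_mem hx
            rwa [← zpow_neg, ← mul_neg] at h }
      obtain ⟨k₀, hLc⟩ := Int.subgroup_cyclic L
      have hmemL : ∀ t : ℤ, gb r ^ (2 * t) ∈ K ↔ k₀ ∣ t := by
        intro t
        rw [← mem_closure_int, ← hLc]
        exact Iff.rfl
      have hrL : gb r ^ (2 * (r : ℤ)) ∈ K := by
        rw [show (2 * (r : ℤ)) = ((2 * r : ℕ) : ℤ) by push_cast; ring, zpow_natCast, mk_rel2]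
        exact K.one_mem
      have hk₀r : k₀ ∣ (r : ℤ) := (hmemL _).mp hrL
      have hk₀ : k₀ ≠ 0 := by
        intro h
        rw [h] at hk₀r
        have : ((r : ℕ) : ℤ) = 0 := zero_dvd_iff.mp hk₀r
        omega
      set k : ℕ := k₀.natAbs with hkdef
      have hk1 : 1 ≤ k := by
        have := Int.natAbs_pos.mpr hk₀
        omega
      have hkLdvd : ∀ t : ℤ, gb r ^ (2 * t) ∈ K ↔ (k : ℤ) ∣ t := by
        intro t
        rw [hmemL, hkdef, Int.natAbs_dvd]
      have hkr : k ∣ r := by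
        have h := Int.natAbs_dvd_natAbs.mpr hk₀r
        rwa [Int.natAbs_natCast] at h
      have hkler : k ≤ r := Nat.le_of_dvd (by omega) hkr
      -- I : the a-exponents of K
      let I : AddSubgroup ℤ :=
        { carrier := {i | ∃ t : ℤ, ga r ^ i * gb r ^ (2 * t) ∈ K}
          zero_mem' := ⟨0, by
            simp only [zpow_zero, mul_zero, mul_one]
            exact K.one_mem⟩
          add_mem' := by
            rintro x y ⟨t, ht⟩ ⟨t', ht'⟩
            refine ⟨t + t', ?_⟩
            have hmul := K.mul_mem ht ht'
            have heq : (ga r ^ x * gb r ^ (2 * t)) * (ga r ^ y * gb r ^ (2 * t'))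
                = ga r ^ (x + y) * gb r ^ (2 * (t + t')) := by
              calc (ga r ^ x * gb r ^ (2 * t)) * (ga r ^ y * gb r ^ (2 * t'))
                  = ga r ^ x * ((gb r ^ (2 * t) * ga r ^ y) * gb r ^ (2 * t')) := by group
                _ = ga r ^ x * ((ga r ^ y * gb r ^ (2 * t)) * gb r ^ (2 * t')) := by
                    rw [swap_even ⟨t, by ring⟩]
                _ = ga r ^ (x + y) * gb r ^ (2 * t + 2 * t') := by rw [zpow_add, zpow_add]; group
                _ = ga r ^ (x + y) * gb r ^ (2 * (t + t')) := by
                    congr 1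
                    · congr 1
                      ring
            rwa [heq] at hmul
          neg_mem' := by
            rintro x ⟨t, ht⟩
            refine ⟨-t, ?_⟩
            have hinv := K.inv_mem ht
            have heq : (ga r ^ x * gb r ^ (2 * t))⁻¹ = ga r ^ (-x) * gb r ^ (2 * -t) := by
              calc (ga r ^ x * gb r ^ (2 * t))⁻¹ = gb r ^ (-(2 * t)) * ga r ^ (-x) := by
                    rw [mul_inv_rev, ← zpow_neg, ← zpow_neg]
                _ = ga r ^ (-x) * gb r ^ (-(2 * t)) := swap_even (⟨-t, by ring⟩) (-x)
                _ = ga r ^ (-x) * gb r ^ (2 * -t) := by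
                    congr 1
                    · congr 1
                      ring
            rwa [heq] at hinv }
      obtain ⟨m₁, hIc⟩ := Int.subgroup_cyclic I
      have hmemI : ∀ i : ℤ, (∃ t : ℤ, ga r ^ i * gb r ^ (2 * t) ∈ K) ↔ m₁ ∣ i := by
        intro i
        rw [← mem_closure_int, ← hIc]
        exact Iff.rfl
      have hnI : (∃ t : ℤ, ga r ^ ((n : ℕ) : ℤ) * gb r ^ (2 * t) ∈ K) := by
        refine ⟨0, ?_⟩
        rw [mul_zero, zpow_zero, mul_one]
        exact hnA
      have hm₁ : m₁ ≠ 0 := by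
        intro h
        have hd := (hmemI _).mp hnI
        rw [h] at hd
        have : ((n : ℕ) : ℤ) = 0 := zero_dvd_iff.mp hd
        omega
      set mm : ℕ := m₁.natAbs with hmmdef
      have hmm1 : 1 ≤ mm := by
        have := Int.natAbs_pos.mpr hm₁
        omega
      have hmIdvd : ∀ i : ℤ, (∃ t : ℤ, ga r ^ i * gb r ^ (2 * t) ∈ K) ↔ (mm : ℤ) ∣ i := by
        intro i
        rw [hmemI, hmmdef, Int.natAbs_dvd]
      obtain ⟨l₀, hl₀⟩ := (hmIdvd ((mm : ℕ) : ℤ)).mpr dvd_rfl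
      set l : ℤ := l₀ % (k : ℤ) with hldef
      have hkpos : (0 : ℤ) < (k : ℤ) := by exact_mod_cast hk1
      have hl0 : 0 ≤ l := Int.emod_nonneg _ (ne_of_gt hkpos)
      have hllt : l < (k : ℤ) := Int.emod_lt_of_pos _ hkpos
      have hldiff : (k : ℤ) ∣ l - l₀ := by
        have h : (k : ℤ) ∣ l₀ - l := Int.dvd_self_sub_of_emod_eq rfl
        exact (dvd_sub_comm).mp h
      have hgbd : gb r ^ (2 * (l - l₀)) ∈ K := (hkLdvd _).mpr hldiff
      have hc₁ : ga r ^ ((mm : ℕ) : ℤ) * gb r ^ (2 * l) ∈ K := by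
        have h := K.mul_mem hl₀ hgbd
        rwa [mul_assoc, ← zpow_add, show 2 * l₀ + 2 * (l - l₀) = 2 * l by ring] at h
      refine ⟨mm, k, l.toNat, hmm1, ?_, hkler, hkr, ?_⟩
      · have := Int.toNat_of_nonneg hl0
        omega
      have hgen1 : ga r ^ (mm : ℕ) * gb r ^ (2 * l.toNat) =
          ga r ^ ((mm : ℕ) : ℤ) * gb r ^ (2 * l) := by
        rw [← zpow_natCast (ga r), ← zpow_natCast (gb r)]
        have hcst : ((2 * l.toNat : ℕ) : ℤ) = 2 * l := by
          push_cast [Int.toNat_of_nonneg hl0]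
          ring
        rw [hcst]
      have hgen2 : gb r ^ (2 * k) = gb r ^ (2 * (k : ℤ)) := by
        rw [← zpow_natCast (gb r)]
        have hcst : ((2 * k : ℕ) : ℤ) = 2 * (k : ℤ) := by
          push_cast
          ring
        rw [hcst]
      apply le_antisymm
      · -- K ≤ closure
        intro g hg
        obtain ⟨i, jx, rfl⟩ := exists_nf g
        obtain ⟨t, ht⟩ := heven _ hg i jx rfl
        have ht2 : jx = 2 * t := by omega
        subst ht2
        have hiI : (mm : ℤ) ∣ i := (hmIdvd i).mp ⟨t, hg⟩
        obtain ⟨s, hs⟩ := hiI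
        have hcomm : Commute (ga r ^ ((mm : ℕ) : ℤ)) (gb r ^ (2 * l)) :=
          (swap_even ⟨l, by ring⟩ ((mm : ℕ) : ℤ)).symm
        have hc₁pow : (ga r ^ ((mm : ℕ) : ℤ) * gb r ^ (2 * l)) ^ s
            = ga r ^ ((mm : ℤ) * s) * gb r ^ (2 * (l * s)) := by
          rw [commute_mul_zpow hcomm, ← zpow_mul, ← zpow_mul]
          congr 1
          congr 1
          ring
        have hrem : gb r ^ (2 * (t - l * s)) ∈ K := by
          have hx := K.mul_mem hg (K.inv_mem (Subgroup.zpow_mem K hc₁ s))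
          have heq : (ga r ^ i * gb r ^ (2 * t)) *
              ((ga r ^ ((mm : ℕ) : ℤ) * gb r ^ (2 * l)) ^ s)⁻¹ = gb r ^ (2 * (t - l * s)) := by
            rw [hc₁pow]
            calc (ga r ^ i * gb r ^ (2 * t)) * (ga r ^ ((mm : ℤ) * s) * gb r ^ (2 * (l * s)))⁻¹
                = ga r ^ i * ((gb r ^ (2 * t) * gb r ^ (-(2 * (l * s)))) * ga r ^ (-((mm : ℤ) * s))) := by
                  rw [mul_inv_rev, ← zpow_neg, ← zpow_neg]
                  group
              _ = ga r ^ i * (gb r ^ (2 * (t - l * s)) * ga r ^ (-((mm : ℤ) * s))) := by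
                  rw [← zpow_add, show 2 * t + -(2 * (l * s)) = 2 * (t - l * s) by ring]
              _ = ga r ^ i * (ga r ^ (-((mm : ℤ) * s)) * gb r ^ (2 * (t - l * s))) := by
                  rw [swap_even ⟨t - l * s, by ring⟩]
              _ = ga r ^ (i + -((mm : ℤ) * s)) * gb r ^ (2 * (t - l * s)) := by
                  rw [zpow_add]
                  group
              _ = gb r ^ (2 * (t - l * s)) := by
                  rw [show i + -((mm : ℤ) * s) = 0 by omega, zpow_zero, one_mul]
          rwa [heq] at hx
        obtain ⟨u, hu⟩ := (hkLdvd _).mp hrem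
        have hgexp : ga r ^ i * gb r ^ (2 * t)
            = (ga r ^ ((mm : ℕ) : ℤ) * gb r ^ (2 * l)) ^ s * (gb r ^ (2 * (k : ℤ))) ^ u := by
          rw [hc₁pow, ← zpow_mul, mul_assoc, ← zpow_add]
          have e1 : i = (mm : ℤ) * s := hs
          have e2 : 2 * t = 2 * (l * s) + 2 * (k : ℤ) * u := by
            have h := hu
            linarith [hu]
          rw [e1, e2]
        rw [hgexp]
        refine Subgroup.mul_mem _ (Subgroup.zpow_mem _ ?_ s) (Subgroup.zpow_mem _ ?_ u)
        · rw [← hgen1]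
          exact Subgroup.subset_closure (Set.mem_insert _ _)
        · rw [← hgen2]
          exact Subgroup.subset_closure (Set.mem_insert_of_mem _ rfl)
      · -- closure ≤ K
        rw [Subgroup.closure_le]
        intro x hx
        simp only [Set.mem_insert_iff, Set.mem_singleton_iff] at hx
        rcases hx with rfl | rfl
        · rw [SetLike.mem_coe, hgen1]
          exact hc₁
        · rw [SetLike.mem_coe, hgen2]
          exact (hkLdvd ((k : ℕ) : ℤ)).mpr dvd_rfl
  · -- disjointness
    rintro K ⟨⟨m, k, l, hm, hlk, hkr, hkdvd, hK1⟩, ⟨m', k', j', hm', hk', hj', hdvd', hK2⟩⟩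
    have hker : K ≤ (par r).ker := by
      rw [hK1, Subgroup.closure_le]
      intro x hx
      simp only [Set.mem_insert_iff, Set.mem_singleton_iff] at hx
      rcases hx with rfl | rfl
      · rw [SetLike.mem_coe, MonoidHom.mem_ker]
        have h := par_nf (r := r) ((m : ℕ) : ℤ) ((2 * l : ℕ) : ℤ)
        rw [zpow_natCast, zpow_natCast] at h
        rw [h, Int.cast_natCast, zmod2_even, ofAdd_zero]
      · rw [SetLike.mem_coe, MonoidHom.mem_ker]
        have h := par_nf (r := r) 0 ((2 * k : ℕ) : ℤ)
        rw [zpow_natCast, zpow_zero, one_mul] at h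
        rw [h, Int.cast_natCast, zmod2_even, ofAdd_zero]
    have hmemgen : ga r ^ j' * gb r ^ (2 * k' - 1) ∈ K := by
      rw [hK2]
      exact Subgroup.subset_closure (Set.mem_insert_of_mem _ rfl)
    have hpar : par r (ga r ^ j' * gb r ^ (2 * k' - 1)) = 1 := hker hmemgen
    have hval : par r (ga r ^ j' * gb r ^ (2 * k' - 1)) =
        Multiplicative.ofAdd (((2 * k' - 1 : ℕ) : ℤ) : ZMod 2) := by
      have h := par_nf (r := r) ((j' : ℕ) : ℤ) ((2 * k' - 1 : ℕ) : ℤ)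
      rw [zpow_natCast, zpow_natCast] at h
      exact h
    rw [hval] at hpar
    have hoddk : ((((2 * k' - 1 : ℕ) : ℤ) : ZMod 2)) = 1 := by
      rw [show (2 * k' - 1 : ℕ) = 2 * (k' - 1) + 1 by omega, Int.cast_natCast, zmod2_odd]
    rw [hoddk] at hpar
    have : (1 : ZMod 2) = 0 := Multiplicative.ofAdd.injective
      (hpar.trans (ofAdd_zero).symm)
    exact absurd this (by decide)
end
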